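/- arXiv:1005.3906 — 5 statements merged into one kernel-verified Lean document; each statement's English description precedes it below -/
import Mathlib

section
/- Let G be a group and let δ : H₂(G, ℤ) → H₂(G^{ab}, ℤ) be the homomorphism induced by the abelianization map G → G^{ab}. Then the second and third terms of the lower central series of G coincide, Γ₂(G) = Γ₃(G), if and only if δ is surjective. -/
/-- The differential `d₂ : C₂(G) → C₁(G)` of the inhomogeneous bar complex of `G` with
trivial `ℤ`-coefficients: `d₂(g,h) = h - gh + g`. -/
noncomputable def barD2 (G : Type*) [Group G] : ((G × G) →₀ ℤ) →ₗ[ℤ] (G →₀ ℤ) :=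
  Finsupp.lsum ℤ fun p =>
    (Finsupp.lsingle p.2 : ℤ →ₗ[ℤ] (G →₀ ℤ)) - Finsupp.lsingle (p.1 * p.2) +
      Finsupp.lsingle p.1

/-- The differential `d₃ : C₃(G) → C₂(G)` of the inhomogeneous bar complex:
`d₃(g,h,k) = (h,k) - (gh,k) + (g,hk) - (g,h)`. -/
noncomputable def barD3 (G : Type*) [Group G] : ((G × G × G) →₀ ℤ) →ₗ[ℤ] ((G × G) →₀ ℤ) :=
  Finsupp.lsum ℤ fun p =>
    (Finsupp.lsingle (p.2.1, p.2.2) : ℤ →ₗ[ℤ] ((G × G) →₀ ℤ)) -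
        Finsupp.lsingle (p.1 * p.2.1, p.2.2) +
      Finsupp.lsingle (p.1, p.2.1 * p.2.2) - Finsupp.lsingle (p.1, p.2.1)

/-- The second group homology `H₂(G, ℤ)` with trivial integer coefficients, computed from the
inhomogeneous bar complex as `ker d₂ / im d₃`. -/
noncomputable def H2Group (G : Type*) [Group G] :=
  LinearMap.ker (barD2 G) ⧸
    Submodule.comap (LinearMap.ker (barD2 G)).subtype (LinearMap.range (barD3 G))

noncomputable instance (G : Type*) [Group G] : AddCommGroup (H2Group G) :=
  inferInstanceAs (AddCommGroup (_ ⧸ _))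

noncomputable instance (G : Type*) [Group G] : Module ℤ (H2Group G) :=
  inferInstanceAs (Module ℤ (_ ⧸ _))

/-!
If `Γ₂ = Γ₃`, lift a cycle of `Gᵃᵇ` to `G` along a set-theoretic section. Its boundary lies in
the kernel of `C₁(G) → C₁(Gᵃᵇ)`, and every element of that kernel is the boundary of a chain that
maps to a boundary of `Gᵃᵇ`: this reduces to `[c] - [1]` for `c ∈ Γ₂ = [Γ₂, G]`, and for a
commutator `⁅c, g⁆` with `c ∈ Γ₂` such a chain can be written down. Correcting the lift by that
chain gives a cycle of `G` mapping onto the given class.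

Conversely, `E = G/Γ₃` is a central extension of `Gᵃᵇ`. A section `s` gives a central 2-cocycle
`f(a, b) = s(a) s(b) s(ab)⁻¹`; evaluating it on 2-chains kills boundaries, and also the images of
cycles of `E`, since on those `f` is the coboundary of `e ↦ s(ē)⁻¹ e`. If `δ` is onto, it kills
the cycle `(a, b) - (b, a)`, so `f` is symmetric, the `s(a)` commute, `E` is abelian and
`Γ₂ ≤ Γ₃`.
-/

open Finsupp

section BarComplex

variable {G H : Type*} [Group G] [Group H]

@[simp]
theorem barD2_single (g h : G) (n : ℤ) :
    barD2 G (single (g, h) n) = single h n - single (g * h) n + single g n := by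
  simp [barD2]

@[simp]
theorem barD3_single (g h k : G) (n : ℤ) :
    barD3 G (single (g, h, k) n) =
      single (h, k) n - single (g * h, k) n + single (g, h * k) n - single (g, h) n := by
  simp [barD3]

noncomputable def barMap₁ (f : G →* H) : (G →₀ ℤ) →ₗ[ℤ] (H →₀ ℤ) :=
  lmapDomain ℤ ℤ f

noncomputable def barMap₂ (f : G →* H) : ((G × G) →₀ ℤ) →ₗ[ℤ] ((H × H) →₀ ℤ) :=
  lmapDomain ℤ ℤ fun p : G × G => (f p.1, f p.2)

@[simp]
theorem barMap₁_single (f : G →* H) (g : G) (n : ℤ) :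
    barMap₁ f (single g n) = single (f g) n :=
  mapDomain_single

@[simp]
theorem barMap₂_single (f : G →* H) (g h : G) (n : ℤ) :
    barMap₂ f (single (g, h) n) = single (f g, f h) n :=
  mapDomain_single

theorem barD2_comp_barMap₂ (f : G →* H) :
    barD2 H ∘ₗ barMap₂ f = barMap₁ f ∘ₗ barD2 G := by
  ext ⟨g, h⟩
  simp

theorem barMap₂_mem_ker_barD2 (f : G →* H) {x : (G × G) →₀ ℤ}
    (hx : x ∈ LinearMap.ker (barD2 G)) : barMap₂ f x ∈ LinearMap.ker (barD2 H) := by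
  rw [LinearMap.mem_ker] at hx ⊢
  rw [← LinearMap.comp_apply, barD2_comp_barMap₂, LinearMap.comp_apply, hx, map_zero]

def SurjectiveOnH2 (f : G →* H) : Prop :=
  ∀ z ∈ LinearMap.ker (barD2 H), ∃ x ∈ LinearMap.ker (barD2 G),
    barMap₂ f x - z ∈ LinearMap.range (barD3 H)

theorem surjective_iff_surjectiveOnH2 (f : G →* H) (δ : H2Group G →ₗ[ℤ] H2Group H)
    (hδ : ∀ (x : (G × G) →₀ ℤ) (hx : x ∈ LinearMap.ker (barD2 G))
      (hy : barMap₂ f x ∈ LinearMap.ker (barD2 H)),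
      δ (Submodule.Quotient.mk ⟨x, hx⟩) = Submodule.Quotient.mk ⟨barMap₂ f x, hy⟩) :
    Function.Surjective δ ↔ SurjectiveOnH2 f := by
  have hδ' (x : (G × G) →₀ ℤ) (hx) (z : (H × H) →₀ ℤ) (hz : z ∈ LinearMap.ker (barD2 H)) :
      δ (Submodule.Quotient.mk ⟨x, hx⟩) = Submodule.Quotient.mk ⟨z, hz⟩ ↔
        barMap₂ f x - z ∈ LinearMap.range (barD3 H) := by
    rw [hδ x hx (barMap₂_mem_ker_barD2 f hx)]
    exact Submodule.Quotient.eq _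
  constructor
  · intro hδs z hz
    obtain ⟨ξ, hξ⟩ := hδs (Submodule.Quotient.mk ⟨z, hz⟩)
    obtain ⟨⟨x, hx⟩, rfl⟩ := Submodule.Quotient.mk_surjective _ ξ
    exact ⟨x, hx, (hδ' x hx z hz).mp hξ⟩
  · intro hf ζ
    obtain ⟨⟨z, hz⟩, rfl⟩ := Submodule.Quotient.mk_surjective _ ζ
    obtain ⟨x, hx, hxz⟩ := hf z hz
    exact ⟨Submodule.Quotient.mk ⟨x, hx⟩, (hδ' x hx z hz).mpr hxz⟩

theorem SurjectiveOnH2.of_comp {K : Type*} [Group K] {f : G →* H} {g : H →* K}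
    (h : SurjectiveOnH2 (g.comp f)) : SurjectiveOnH2 g := by
  intro z hz
  obtain ⟨x, hx, hxz⟩ := h z hz
  refine ⟨barMap₂ f x, barMap₂_mem_ker_barD2 f hx, ?_⟩
  rwa [barMap₂, barMap₂, lmapDomain_apply, lmapDomain_apply, ← mapDomain_comp]

end BarComplex

theorem Finsupp.sub_mapDomain_mem {α R : Type*} [Ring R] {M : Submodule R (α →₀ R)}
    {φ : α → α} (h : ∀ a, single a 1 - single (φ a) 1 ∈ M) (v : α →₀ R) :
    v - mapDomain φ v ∈ M := by
  induction v using Finsupp.induction_linear with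
  | zero => simp
  | add v w hv hw =>
    rw [mapDomain_add, add_sub_add_comm]
    exact add_mem hv hw
  | single a r =>
    simpa [mapDomain_single, smul_sub] using M.smul_mem r (h a)

section Lifting

open scoped commutatorElement

variable {G H : Type*} [Group G] [Group H] (f : G →* H)

noncomputable def relativeBoundaries : Submodule ℤ (G →₀ ℤ) :=
  ((LinearMap.range (barD3 H)).comap (barMap₂ f)).map (barD2 G)

variable {f}

theorem barD2_mem_relativeBoundaries {w : (G × G) →₀ ℤ}
    (hw : barMap₂ f w ∈ LinearMap.range (barD3 H)) : barD2 G w ∈ relativeBoundaries f :=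
  Submodule.mem_map_of_mem hw

variable (f) in
def boundarySubgroup : Subgroup G where
  carrier := {c | f c = 1 ∧ single c 1 - single 1 1 ∈ relativeBoundaries f}
  one_mem' := by simp
  mul_mem' := by
    rintro c₁ c₂ ⟨hc₁, hm₁⟩ ⟨hc₂, hm₂⟩
    refine ⟨by simp [hc₁, hc₂], ?_⟩
    have hw : barMap₂ f (single (1, 1) 1 - single (c₁, c₂) 1) ∈ LinearMap.range (barD3 H) := by
      simp [hc₁, hc₂]
    convert add_mem (add_mem hm₁ hm₂) (barD2_mem_relativeBoundaries hw) using 1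
    simp only [map_sub, barD2_single, mul_one]
    abel
  inv_mem' := by
    rintro c ⟨hc, hm⟩
    refine ⟨by simp [hc], ?_⟩
    have hw : barMap₂ f (single (c⁻¹, c) 1 - single (1, 1) 1) ∈ LinearMap.range (barD3 H) := by
      simp [hc]
    convert sub_mem (barD2_mem_relativeBoundaries hw) hm using 1
    simp only [map_sub, barD2_single, mul_one, inv_mul_cancel]
    abel

theorem commutatorElement_mem_boundarySubgroup {p : G} (hp : f p = 1) (q : G) :
    ⁅p, q⁆ ∈ boundarySubgroup f := by
  refine ⟨by simp [commutatorElement_def, hp], ?_⟩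
  set w : (G × G) →₀ ℤ := single (p, p⁻¹) 1 - single (p, q * p⁻¹) 1 - single (q, p⁻¹) 1 +
    single (q, q⁻¹) 1 + single (1, 1) 1 - single (p * q * p⁻¹, q⁻¹) 1
  have hw : barMap₂ f w = barD3 H (single (f q, 1, 1) 1 - single (1, 1, f q) 1) := by
    simp only [w, map_sub, map_add, barMap₂_single, hp, map_inv, inv_one, map_mul, mul_one,
      map_one, one_mul, barD3_single, sub_add_cancel, sub_self, zero_add]
    abel
  convert barD2_mem_relativeBoundaries (f := f) ⟨_, hw.symm⟩ using 1
  simp only [w, map_add, map_sub, barD2_single, commutatorElement_def, mul_inv_cancel, mul_one,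
    mul_assoc]
  abel

theorem single_sub_single_one_mem_relativeBoundaries (hf : f.ker ≤ ⁅f.ker, ⊤⁆) {c : G}
    (hc : f c = 1) : single c 1 - single 1 1 ∈ relativeBoundaries f := by
  have hle : ⁅f.ker, ⊤⁆ ≤ boundarySubgroup f :=
    Subgroup.commutator_le.mpr fun p hp q _ => commutatorElement_mem_boundarySubgroup hp q
  exact (hle (hf hc)).2

theorem ker_barMap₁_le_relativeBoundaries (hf : f.ker ≤ ⁅f.ker, ⊤⁆) {s : H → G}
    (hs : Function.RightInverse s f) : LinearMap.ker (barMap₁ f) ≤ relativeBoundaries f := by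
  intro v hv
  have hsection (g : G) : single g 1 - single (s (f g)) 1 ∈ relativeBoundaries f := by
    set c := (s (f g))⁻¹ * g
    have hc : f c = 1 := by simp [c, hs (f g)]
    have hw : barMap₂ f (single (1, 1) 1 - single (s (f g), c) 1) ∈
        LinearMap.range (barD3 H) := ⟨single (f g, 1, 1) 1, by simp [hc, hs (f g)]⟩
    convert add_mem (single_sub_single_one_mem_relativeBoundaries hf hc)
      (barD2_mem_relativeBoundaries hw) using 1
    simp only [map_sub, barD2_single, mul_one, c, mul_inv_cancel_left]
    abel
  have hv0 : mapDomain (s ∘ f) v = 0 := by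
    rw [mapDomain_comp]
    exact (congrArg (mapDomain s) hv).trans mapDomain_zero
  simpa [hv0] using Finsupp.sub_mapDomain_mem (φ := s ∘ f) hsection v

theorem surjectiveOnH2_of_ker_le_commutator (hsurj : Function.Surjective f)
    (hf : f.ker ≤ ⁅f.ker, ⊤⁆) : SurjectiveOnH2 f := by
  intro z hz
  set s := Function.surjInv hsurj
  have hs : Function.RightInverse s f := Function.rightInverse_surjInv hsurj
  set x₀ : (G × G) →₀ ℤ := mapDomain (fun q : H × H => (s q.1, s q.2)) z
  have hx₀ : barMap₂ f x₀ = z := by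
    rw [barMap₂, lmapDomain_apply, ← mapDomain_comp]
    convert mapDomain_id
    ext q <;> simp [hs _]
  have hd : barD2 G x₀ ∈ relativeBoundaries f := by
    apply ker_barMap₁_le_relativeBoundaries hf hs
    rw [LinearMap.mem_ker, ← LinearMap.comp_apply, ← barD2_comp_barMap₂, LinearMap.comp_apply,
      hx₀]
    exact hz
  obtain ⟨w, hw, hwx⟩ := hd
  refine ⟨x₀ - w, by simp [hwx], ?_⟩
  rw [map_sub, hx₀, sub_sub_cancel_left]
  exact neg_mem hw

end Lifting

section CentralExtension

open Subgroup
open scoped IsMulCommutative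

variable {E A : Type*} [Group E] [Group A] {p : E →* A} {s : A → E}
  (hs : Function.RightInverse s p) (hcen : p.ker ≤ center E)

theorem commute_coe_center (z : center E) (x : E) : Commute (z : E) x :=
  (mem_center_iff.mp z.2 x).symm

noncomputable def extensionCocycle (a b : A) : center E :=
  ⟨s a * s b * (s (a * b))⁻¹, hcen (by simp [hs _])⟩

noncomputable def sectionDefect (e : E) : center E :=
  ⟨(s (p e))⁻¹ * e, hcen (by simp [hs _])⟩

theorem section_mul_section (a b : A) :
    s a * s b = extensionCocycle hs hcen a b * s (a * b) := by
  simp [extensionCocycle]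

theorem section_mul_sectionDefect (e : E) : s (p e) * sectionDefect hs hcen e = e := by
  simp [sectionDefect]

theorem extensionCocycle_mul_extensionCocycle (a b c : A) :
    extensionCocycle hs hcen a b * extensionCocycle hs hcen (a * b) c =
      extensionCocycle hs hcen b c * extensionCocycle hs hcen a (b * c) := by
  ext
  apply mul_right_cancel (b := s (a * b * c))
  simp only [Subgroup.coe_mul]
  calc extensionCocycle hs hcen a b * (extensionCocycle hs hcen (a * b) c : E) * s (a * b * c)
        = extensionCocycle hs hcen a b * (s (a * b) * s c) := by
        rw [mul_assoc, section_mul_section]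
    _ = s a * (extensionCocycle hs hcen b c * s (b * c)) := by
        rw [← mul_assoc, ← section_mul_section, mul_assoc, section_mul_section]
    _ = extensionCocycle hs hcen b c * (s a * s (b * c)) :=
        ((commute_coe_center _ _).left_comm _).symm
    _ = extensionCocycle hs hcen b c * (extensionCocycle hs hcen a (b * c) : E) *
          s (a * b * c) := by
        rw [section_mul_section hs hcen a, mul_assoc, mul_assoc a]

theorem extensionCocycle_mul_sectionDefect (e e' : E) :
    extensionCocycle hs hcen (p e) (p e') * sectionDefect hs hcen e * sectionDefect hs hcen e' =
      sectionDefect hs hcen (e * e') := by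
  ext
  apply mul_left_cancel (a := s (p (e * e')))
  simp only [Subgroup.coe_mul]
  calc s (p (e * e')) * (extensionCocycle hs hcen (p e) (p e') * (sectionDefect hs hcen e : E) *
          sectionDefect hs hcen e')
        = extensionCocycle hs hcen (p e) (p e') * s (p e * p e') *
          (sectionDefect hs hcen e * (sectionDefect hs hcen e' : E)) := by
        rw [map_mul, (commute_coe_center (extensionCocycle hs hcen _ _) (s _)).eq]
        simp only [mul_assoc]
    _ = s (p e) * s (p e') * (sectionDefect hs hcen e * (sectionDefect hs hcen e' : E)) := by
        rw [section_mul_section hs hcen]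
    _ = s (p e) * sectionDefect hs hcen e * (s (p e') * sectionDefect hs hcen e') :=
        (commute_coe_center _ _).symm.mul_mul_mul_comm _ _
    _ = s (p (e * e')) * sectionDefect hs hcen (e * e') := by
        simp only [section_mul_sectionDefect]

noncomputable def evalCocycle : ((A × A) →₀ ℤ) →ₗ[ℤ] Additive (center E) :=
  linearCombination ℤ fun q => Additive.ofMul (extensionCocycle hs hcen q.1 q.2)

noncomputable def evalSectionDefect : (E →₀ ℤ) →ₗ[ℤ] Additive (center E) :=
  linearCombination ℤ fun e => Additive.ofMul (sectionDefect hs hcen e)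

theorem evalCocycle_comp_barD3 : evalCocycle hs hcen ∘ₗ barD3 A = 0 := by
  refine Finsupp.lhom_ext' fun ⟨a, b, c⟩ => LinearMap.ext_ring ?_
  have h := congrArg Additive.ofMul (extensionCocycle_mul_extensionCocycle hs hcen a b c)
  simp only [ofMul_mul] at h
  simp only [LinearMap.comp_apply, lsingle_apply, barD3_single, map_sub, map_add, evalCocycle,
    linearCombination_single, one_smul, LinearMap.zero_apply]
  rw [← sub_eq_zero.mpr h.symm]
  abel

theorem evalCocycle_comp_barMap₂ :
    evalCocycle hs hcen ∘ₗ barMap₂ p = -(evalSectionDefect hs hcen ∘ₗ barD2 E) := by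
  refine Finsupp.lhom_ext' fun ⟨e, e'⟩ => LinearMap.ext_ring ?_
  have h := congrArg Additive.ofMul (extensionCocycle_mul_sectionDefect hs hcen e e')
  simp only [ofMul_mul] at h
  simp only [LinearMap.comp_apply, lsingle_apply, LinearMap.neg_apply, barMap₂_single,
    barD2_single, map_sub, map_add, evalCocycle, evalSectionDefect, linearCombination_single,
    one_smul]
  rw [← h]
  abel

theorem evalCocycle_eq_zero_of_surjectiveOnH2 (h : SurjectiveOnH2 p) {z : (A × A) →₀ ℤ}
    (hz : z ∈ LinearMap.ker (barD2 A)) : evalCocycle hs hcen z = 0 := by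
  obtain ⟨x, hx, y, hy⟩ := h z hz
  rw [← sub_sub_cancel (barMap₂ p x) z, ← hy, map_sub, ← LinearMap.comp_apply,
    evalCocycle_comp_barMap₂, ← LinearMap.comp_apply, evalCocycle_comp_barD3]
  simp [LinearMap.mem_ker.mp hx]

theorem extensionCocycle_comm (h : SurjectiveOnH2 p) {a b : A} (hab : Commute a b) :
    extensionCocycle hs hcen a b = extensionCocycle hs hcen b a := by
  have hz : single (a, b) 1 - single (b, a) 1 ∈ LinearMap.ker (barD2 A) := by
    simp only [LinearMap.mem_ker, map_sub, barD2_single, hab.eq]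
    abel
  simpa [evalCocycle, sub_eq_zero] using evalCocycle_eq_zero_of_surjectiveOnH2 hs hcen h hz

end CentralExtension

theorem commute_of_surjectiveOnH2 {E A : Type*} [Group E] [Group A] {p : E →* A}
    (hp : Function.Surjective p) (hcen : p.ker ≤ Subgroup.center E) (h : SurjectiveOnH2 p)
    {e e' : E} (hc : Commute (p e) (p e')) : Commute e e' := by
  have hs := Function.rightInverse_surjInv hp
  have hsec : Commute (Function.surjInv hp (p e)) (Function.surjInv hp (p e')) := by
    rw [Commute, SemiconjBy, section_mul_section hs hcen, section_mul_section hs hcen,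
      extensionCocycle_comm hs hcen h hc, hc.eq]
  have key : Commute (Function.surjInv hp (p e) * sectionDefect hs hcen e)
      (Function.surjInv hp (p e') * sectionDefect hs hcen e') :=
    (hsec.mul_right (commute_coe_center _ _).symm).mul_left (commute_coe_center _ _)
  rwa [section_mul_sectionDefect, section_mul_sectionDefect] at key

section LowerCentralSeries

open scoped commutatorElement

variable {G : Type*} [Group G]

theorem QuotientGroup.commute_mk_iff {N : Subgroup G} [N.Normal] {a b : G} :
    Commute (a : G ⧸ N) b ↔ ⁅a, b⁆ ∈ N := by
  rw [← QuotientGroup.eq_one_iff, ← commutatorElement_eq_one_iff_commute]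
  exact Iff.rfl

theorem QuotientGroup.mk_mem_center_of_commutator_le {N K : Subgroup G} [N.Normal]
    (hK : ⁅K, ⊤⁆ ≤ N) {x : G} (hx : x ∈ K) : (x : G ⧸ N) ∈ Subgroup.center (G ⧸ N) := by
  refine Subgroup.mem_center_iff.mpr fun e => ?_
  obtain ⟨y, rfl⟩ := QuotientGroup.mk_surjective e
  exact (QuotientGroup.commute_mk_iff.mpr
    (hK (Subgroup.commutator_mem_commutator hx (Subgroup.mem_top y)))).eq.symm

theorem lowerCentralSeries_one_le_two_of_surjectiveOnH2
    (h : SurjectiveOnH2 (Abelianization.of : G →* Abelianization G)) :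
    (⊤ : Subgroup G).lowerCentralSeries 1 ≤ (⊤ : Subgroup G).lowerCentralSeries 2 := by
  set N := (⊤ : Subgroup G).lowerCentralSeries 2
  have hN : N ≤ Abelianization.of.ker := by
    rw [Abelianization.ker_of, ← Subgroup.top_lowerCentralSeries_one]
    exact Subgroup.lowerCentralSeries_antitone _ one_le_two
  set p : G ⧸ N →* Abelianization G := QuotientGroup.lift N Abelianization.of hN
  have hp : Function.Surjective p :=
    QuotientGroup.lift_surjective_of_surjective N _ QuotientGroup.mk_surjective hN
  have hcen : p.ker ≤ Subgroup.center (G ⧸ N) := by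
    intro e he
    obtain ⟨x, rfl⟩ := QuotientGroup.mk_surjective e
    refine QuotientGroup.mk_mem_center_of_commutator_le le_rfl (K := commutator G) ?_
    rwa [← Abelianization.ker_of]
  have hpH2 : SurjectiveOnH2 p := SurjectiveOnH2.of_comp (f := QuotientGroup.mk' N)
    (by rwa [QuotientGroup.lift_comp_mk'])
  rw [Subgroup.top_lowerCentralSeries_one, commutator_def, Subgroup.commutator_le]
  exact fun a _ b _ => QuotientGroup.commute_mk_iff.mp
    (commute_of_surjectiveOnH2 hp hcen hpH2 (Commute.all _ _))

end LowerCentralSeries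

/-- Let `δ : H₂(G,ℤ) → H₂(Gᵃᵇ,ℤ)` be the homomorphism induced by the abelianization map
`G → Gᵃᵇ` (i.e. induced on homology by the chain map `(g,h) ↦ (ḡ,h̄)`). Then
`Γ₂(G) = Γ₃(G)` if and only if `δ` is surjective. -/
theorem lowerCentralSeries_two_eq_three_iff_H2_surjective (G : Type*) [Group G]
    (δ : H2Group G →ₗ[ℤ] H2Group (Abelianization G))
    (hδ : ∀ (x : (G × G) →₀ ℤ) (hx : x ∈ LinearMap.ker (barD2 G))
      (hy : Finsupp.mapDomain
          (fun p : G × G => (Abelianization.of p.1, Abelianization.of p.2)) x ∈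
        LinearMap.ker (barD2 (Abelianization G))),
      δ (Submodule.Quotient.mk ⟨x, hx⟩) =
        Submodule.Quotient.mk
          ⟨Finsupp.mapDomain
              (fun p : G × G => (Abelianization.of p.1, Abelianization.of p.2)) x, hy⟩) :
    (⊤ : Subgroup G).lowerCentralSeries 1 = (⊤ : Subgroup G).lowerCentralSeries 2 ↔ Function.Surjective δ := by
  rw [surjective_iff_surjectiveOnH2 Abelianization.of δ hδ]
  constructor
  · intro h12
    refine surjectiveOnH2_of_ker_le_commutator QuotientGroup.mk_surjective ?_
    rw [Abelianization.ker_of]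
    exact h12.le
  · intro h
    exact le_antisymm (lowerCentralSeries_one_le_two_of_surjectiveOnH2 h)
      (Subgroup.lowerCentralSeries_antitone _ one_le_two)
end

section
/- Let n ≥ 3 and let H be either the quaternion group Q₈ of order 8 or the dihedral group D₈ of order 8. Then there is no surjective group homomorphism from B_n(ℝP²) onto H. -/
open FreeGroup in
/-- Relators of Van Buskirk's presentation of the braid group of the projective plane,
with 0-indexed generators: σ₀,…,σ_{n-2} (`Sum.inl`) and ρ₀,…,ρ_{n-1} (`Sum.inr`). -/
def vanBuskirkRels (n : ℕ) : Set (FreeGroup (Sum (Fin (n-1)) (Fin n))) :=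
  {w | (∃ (i j : Fin (n-1)), ((i:ℕ)+2 ≤ (j:ℕ) ∨ (j:ℕ)+2 ≤ (i:ℕ)) ∧
        w = of (Sum.inl i) * of (Sum.inl j) * (of (Sum.inl i))⁻¹ * (of (Sum.inl j))⁻¹)
    ∨ (∃ (i : ℕ) (h : i < n-1) (h' : i+1 < n-1),
        w = of (Sum.inl ⟨i,h⟩) * of (Sum.inl ⟨i+1,h'⟩) * of (Sum.inl ⟨i,h⟩) *
            (of (Sum.inl ⟨i+1,h'⟩))⁻¹ * (of (Sum.inl ⟨i,h⟩))⁻¹ * (of (Sum.inl ⟨i+1,h'⟩))⁻¹)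
    ∨ (∃ (i : Fin (n-1)) (j : Fin n), (j:ℕ) ≠ (i:ℕ) ∧ (j:ℕ) ≠ (i:ℕ)+1 ∧
        w = of (Sum.inl i) * of (Sum.inr j) * (of (Sum.inl i))⁻¹ * (of (Sum.inr j))⁻¹)
    ∨ (∃ (i : ℕ) (h : i < n-1) (hi : i < n) (hi' : i+1 < n),
        w = of (Sum.inl ⟨i,h⟩) * of (Sum.inr ⟨i+1,hi'⟩) * of (Sum.inl ⟨i,h⟩) *
            (of (Sum.inr ⟨i,hi⟩))⁻¹)
    ∨ (∃ (i : ℕ) (h : i < n-1) (hi : i < n) (hi' : i+1 < n),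
        w = (of (Sum.inr ⟨i+1,hi'⟩))⁻¹ * (of (Sum.inr ⟨i,hi⟩))⁻¹ * of (Sum.inr ⟨i+1,hi'⟩) *
            of (Sum.inr ⟨i,hi⟩) * ((of (Sum.inl ⟨i,h⟩))⁻¹)^2)
    ∨ (∃ (h : 0 < n),
        w = (of (Sum.inr ⟨0,h⟩))^2 *
            (((List.finRange (n-1)).map (fun i => of (Sum.inl i))).prod *
             (((List.finRange (n-1)).reverse.map (fun i => of (Sum.inl i))).prod))⁻¹)}

/-- The braid group `B_n(ℝP²)` of the projective plane, via Van Buskirk's presentation. -/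
abbrev BnRP2 (n : ℕ) : Type := PresentedGroup (vanBuskirkRels n)

/-- The generator σ_i (0-indexed). -/
def BnRP2.sigma (n : ℕ) (i : Fin (n-1)) : BnRP2 n := PresentedGroup.of (Sum.inl i)

/-- The generator ρ_j (0-indexed). -/
def BnRP2.rho (n : ℕ) (j : Fin n) : BnRP2 n := PresentedGroup.of (Sum.inr j)

/-!
Let `Z` be the centre of `G = Q₈` or `D₈`. Every square lies in `Z`, so in the exponent-two group
`G/Z` the braid relation identifies all images of the `σᵢ`, and `ρᵢ = σᵢ ρᵢ₊₁ σᵢ` identifies all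
images of the `ρⱼ`. For `n ≥ 3` the generators `σ₂` and `ρ₁` (`sigma n 1` and `rho n 0` below)
commute, and two commuting elements of `G` are central or congruent modulo `Z`. Hence a surjection
`B_n(ℝP²) → G` would make `G/Z` cyclic, and `G` abelian.
-/

theorem Subgroup.exists_zpowers_eq_closure_pair {G : Type*} [Group G] {a b : G}
    (h : a = 1 ∨ b = 1 ∨ a = b) : ∃ c, Subgroup.zpowers c = Subgroup.closure {a, b} := by
  rcases h with rfl | rfl | rfl
  · exact ⟨b, by rw [Subgroup.closure_insert_one, Subgroup.zpowers_eq_closure]⟩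
  · exact ⟨a, by rw [Set.pair_comm, Subgroup.closure_insert_one, Subgroup.zpowers_eq_closure]⟩
  · exact ⟨a, by rw [Set.pair_eq_singleton, Subgroup.zpowers_eq_closure]⟩

theorem mul_mul_eq_right_of_forall_sq_eq_one {A : Type*} [Group A] (hA : ∀ a : A, a ^ 2 = 1)
    (x y : A) : x * y * x = y := by
  have hxy : Commute x y :=
    Commute.of_orderOf_dvd_two (fun a ↦ orderOf_dvd_of_pow_eq_one (hA a)) x y
  rw [hxy.eq, mul_assoc, ← sq, hA, mul_one]

namespace BnRP2

variable {n : ℕ} {A : Type*} [Group A]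

theorem sigma_braid (i : ℕ) (h : i + 1 < n - 1) :
    sigma n ⟨i, by omega⟩ * sigma n ⟨i + 1, h⟩ * sigma n ⟨i, by omega⟩ =
      sigma n ⟨i + 1, h⟩ * sigma n ⟨i, by omega⟩ * sigma n ⟨i + 1, h⟩ := by
  have hrel : sigma n ⟨i, by omega⟩ * sigma n ⟨i + 1, h⟩ * sigma n ⟨i, by omega⟩ *
      (sigma n ⟨i + 1, h⟩)⁻¹ * (sigma n ⟨i, by omega⟩)⁻¹ * (sigma n ⟨i + 1, h⟩)⁻¹ = 1 :=
    PresentedGroup.one_of_mem (Or.inr (Or.inl ⟨i, by omega, h, rfl⟩))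
  rwa [mul_inv_eq_one, mul_inv_eq_iff_eq_mul, mul_inv_eq_iff_eq_mul] at hrel

theorem sigma_mul_rho_succ_mul_sigma (i : ℕ) (h : i < n - 1) :
    sigma n ⟨i, h⟩ * rho n ⟨i + 1, by omega⟩ * sigma n ⟨i, h⟩ = rho n ⟨i, by omega⟩ :=
  mul_inv_eq_one.mp <| PresentedGroup.one_of_mem
    (Or.inr (Or.inr (Or.inr (Or.inl ⟨i, h, by omega, by omega, rfl⟩))))

theorem commute_sigma_rho (i : Fin (n - 1)) (j : Fin n) (hi : (j : ℕ) ≠ i)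
    (hi' : (j : ℕ) ≠ i + 1) : Commute (sigma n i) (rho n j) := by
  have hrel : sigma n i * rho n j * (sigma n i)⁻¹ * (rho n j)⁻¹ = 1 :=
    PresentedGroup.one_of_mem (Or.inr (Or.inr (Or.inl ⟨i, j, hi, hi', rfl⟩)))
  rwa [mul_inv_eq_one, mul_inv_eq_iff_eq_mul] at hrel


theorem map_sigma_succ (hA : ∀ a : A, a ^ 2 = 1) (ψ : BnRP2 n →* A) (i : ℕ)
    (h : i + 1 < n - 1) :
    ψ (sigma n ⟨i + 1, h⟩) = ψ (sigma n ⟨i, by omega⟩) := by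
  have hbraid := congrArg ψ (sigma_braid i h)
  simp only [map_mul] at hbraid
  rwa [mul_mul_eq_right_of_forall_sq_eq_one hA, mul_mul_eq_right_of_forall_sq_eq_one hA]
    at hbraid

theorem map_rho_succ (hA : ∀ a : A, a ^ 2 = 1) (ψ : BnRP2 n →* A) (i : ℕ) (h : i < n - 1) :
    ψ (rho n ⟨i + 1, by omega⟩) = ψ (rho n ⟨i, by omega⟩) := by
  have hrel := congrArg ψ (sigma_mul_rho_succ_mul_sigma i h)
  simp only [map_mul] at hrel
  rwa [mul_mul_eq_right_of_forall_sq_eq_one hA] at hrel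

theorem map_sigma_eq (hA : ∀ a : A, a ^ 2 = 1) (ψ : BnRP2 n →* A) (i j : Fin (n - 1)) :
    ψ (sigma n i) = ψ (sigma n j) := by
  suffices h : ∀ (k : ℕ) (hk : k < n - 1), ψ (sigma n ⟨k, hk⟩) = ψ (sigma n ⟨0, by omega⟩) by
    rw [h i i.2, h j j.2]
  intro k
  induction k with
  | zero => intro; rfl
  | succ k ih => intro hk; rw [map_sigma_succ hA ψ k hk, ih]

theorem map_rho_eq (hA : ∀ a : A, a ^ 2 = 1) (ψ : BnRP2 n →* A) (i j : Fin n) :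
    ψ (rho n i) = ψ (rho n j) := by
  suffices h : ∀ (k : ℕ) (hk : k < n), ψ (rho n ⟨k, hk⟩) = ψ (rho n ⟨0, by omega⟩) by
    rw [h i i.2, h j j.2]
  intro k
  induction k with
  | zero => intro; rfl
  | succ k ih => intro hk; rw [map_rho_succ hA ψ k (by omega), ih]

theorem range_le_closure_sigma_rho (hA : ∀ a : A, a ^ 2 = 1) (ψ : BnRP2 n →* A)
    (i : Fin (n - 1)) (j : Fin n) : ψ.range ≤ Subgroup.closure {ψ (sigma n i), ψ (rho n j)} := by
  rw [MonoidHom.range_eq_map, ← PresentedGroup.closure_range_of, MonoidHom.map_closure,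
    Subgroup.closure_le]
  rintro _ ⟨_, ⟨k | k, rfl⟩, rfl⟩
  · exact Subgroup.subset_closure (Or.inl (map_sigma_eq hA ψ k i))
  · exact Subgroup.subset_closure (Or.inr (map_rho_eq hA ψ k j))

theorem isCyclic_quotient_center_of_surjective {G : Type*} [Group G] (hn : 3 ≤ n)
    (hsq : ∀ x : G, x ^ 2 ∈ Subgroup.center G)
    (hcomm : ∀ x y : G, Commute x y →
      x ∈ Subgroup.center G ∨ y ∈ Subgroup.center G ∨ x⁻¹ * y ∈ Subgroup.center G)
    (φ : BnRP2 n →* G) (hφ : Function.Surjective φ) : IsCyclic (G ⧸ Subgroup.center G) := by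
  have hQ : ∀ q : G ⧸ Subgroup.center G, q ^ 2 = 1 := by
    rintro ⟨x⟩
    exact (QuotientGroup.eq_one_iff _).2 (hsq x)
  set s := φ (sigma n ⟨1, by omega⟩)
  set r := φ (rho n ⟨0, by omega⟩)
  have hsr : (s : G ⧸ Subgroup.center G) = 1 ∨ (r : G ⧸ Subgroup.center G) = 1 ∨
      (s : G ⧸ Subgroup.center G) = r := by
    simpa only [QuotientGroup.eq_one_iff, QuotientGroup.eq] using
      hcomm s r ((commute_sigma_rho _ _ (by simp) (by simp)).map φ)
  obtain ⟨c, hc⟩ := Subgroup.exists_zpowers_eq_closure_pair hsr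
  set ψ := (QuotientGroup.mk' (Subgroup.center G)).comp φ
  have hψ : ψ.range = ⊤ := MonoidHom.range_eq_top.2 ((QuotientGroup.mk'_surjective _).comp hφ)
  refine isCyclic_iff_exists_zpowers_eq_top.2 ⟨c, top_le_iff.1 ?_⟩
  rw [hc, ← hψ]
  exact range_le_closure_sigma_rho hQ ψ _ _

theorem not_surjective_of_not_isMulCommutative {G : Type*} [Group G] (hn : 3 ≤ n)
    (hsq : ∀ x : G, x ^ 2 ∈ Subgroup.center G)
    (hcomm : ∀ x y : G, Commute x y →
      x ∈ Subgroup.center G ∨ y ∈ Subgroup.center G ∨ x⁻¹ * y ∈ Subgroup.center G)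
    (hG : ¬ IsMulCommutative G) (φ : BnRP2 n →* G) : ¬ Function.Surjective φ := fun hφ ↦
  have := isCyclic_quotient_center_of_surjective hn hsq hcomm φ hφ
  hG (isMulCommutative_of_isCyclic_quotient_center_self G)

end BnRP2

theorem QuaternionGroup.sq_mem_center (x : QuaternionGroup 2) :
    x ^ 2 ∈ Subgroup.center (QuaternionGroup 2) := by
  revert x; decide

theorem QuaternionGroup.mem_center_of_commute (x y : QuaternionGroup 2) (h : Commute x y) :
    x ∈ Subgroup.center _ ∨ y ∈ Subgroup.center _ ∨ x⁻¹ * y ∈ Subgroup.center _ := by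
  revert x y; simp only [commute_iff_eq]; decide

theorem QuaternionGroup.not_isMulCommutative : ¬ IsMulCommutative (QuaternionGroup 2) :=
  fun h ↦ absurd (h.is_comm.comm (a 1) (xa 0)) (by decide)

theorem DihedralGroup.sq_mem_center (x : DihedralGroup 4) :
    x ^ 2 ∈ Subgroup.center (DihedralGroup 4) := by
  revert x; decide

theorem DihedralGroup.mem_center_of_commute (x y : DihedralGroup 4) (h : Commute x y) :
    x ∈ Subgroup.center _ ∨ y ∈ Subgroup.center _ ∨ x⁻¹ * y ∈ Subgroup.center _ := by
  revert x y; simp only [commute_iff_eq]; decide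

/-- For `n ≥ 3`, there is no surjective homomorphism from `B_n(ℝP²)` onto the quaternion
group `Q₈` or the dihedral group `D₈` of order 8. -/
theorem no_surjection_BnRP2_onto_Q8_or_D8 (n : ℕ) (hn : 3 ≤ n) (H : Type) [Group H]
    (hH : Nonempty (H ≃* QuaternionGroup 2) ∨ Nonempty (H ≃* DihedralGroup 4)) :
    ¬ ∃ φ : BnRP2 n →* H, Function.Surjective φ := by
  rintro ⟨φ, hφ⟩
  rcases hH with ⟨⟨e⟩⟩ | ⟨⟨e⟩⟩
  · exact BnRP2.not_surjective_of_not_isMulCommutative hn QuaternionGroup.sq_mem_center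
      QuaternionGroup.mem_center_of_commute QuaternionGroup.not_isMulCommutative
      (e.toMonoidHom.comp φ) (e.surjective.comp hφ)
  · exact BnRP2.not_surjective_of_not_isMulCommutative hn DihedralGroup.sq_mem_center
      DihedralGroup.mem_center_of_commute (DihedralGroup.not_commutative (by decide) (by decide))
      (e.toMonoidHom.comp φ) (e.surjective.comp hφ)
end

section
/- Let n ≥ 5 and let H be a normal subgroup of B_n(ℝP²) contained in the commutator subgroup such that (B_n(ℝP²))^{(1)}/H is abelian. Then H = (B_n(ℝP²))^{(1)}. In particular, (B_n(ℝP²))^{(2)} = (B_n(ℝP²))^{(1)}, i.e., the commutator subgroup of B_n(ℝP²) is perfect. -/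
/-! Write `G = B_n(ℝP²)` and let `f` be the quotient map by `⁅G', G'⁆`. Since `σ_{i+1}` is
conjugate to `σ_i`, every `σ_i σ_0⁻¹` lies in `G'`, so the images of `σ_0 σ_1⁻¹` and `σ_3 σ_0⁻¹`
commute. As `σ_3` commutes with `σ_0` and `σ_1` (this is where `n ≥ 5` enters), `f σ_0` and
`f σ_1` commute, and the braid relations then make all `f σ_i` equal to a single `z`. The
relations involving the `ρ_j` show that `z` commutes with every `f ρ_j`, that `z² = 1` and that all
`f ρ_j` are equal, so the quotient is generated by two commuting elements and `G' ≤ ⁅G', G'⁆`. -/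

open scoped commutatorElement

section GroupTheory

variable {G : Type*} [Group G]

theorem eq_of_commute_of_braid {x y : G} (hc : Commute x y) (hb : x * y * x = y * x * y) :
    x = y := by
  rw [hc.eq] at hb
  exact mul_left_cancel hb

theorem mul_inv_mem_commutator_of_braid {x y : G} (hb : x * y * x = y * x * y) :
    y * x⁻¹ ∈ commutator G := by
  have h : y * x⁻¹ = ⁅x * y, x⁆ := by
    rw [commutatorElement_def, hb]; group
  rw [h, commutator_def]
  exact Subgroup.commutator_mem_commutator trivial trivial

theorem commute_of_commute_mul_inv {x y w : G} (hwx : Commute w x) (hwy : Commute w y)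
    (h : Commute (x * y⁻¹) (w * x⁻¹)) : Commute x y := by
  have hw : Commute (x * y⁻¹) w := (hwx.mul_right hwy.inv_right).symm
  have hx : Commute (x * y⁻¹) x := by
    simpa using (hw.inv_right.mul_right h).inv_right
  simpa using (Commute.refl x).inv_right.mul_right hx.symm

theorem Subgroup.commute_of_mem_closure {S : Set G} (hS : ∀ a ∈ S, ∀ b ∈ S, Commute a b) {x y : G}
    (hx : x ∈ Subgroup.closure S) (hy : y ∈ Subgroup.closure S) : Commute x y :=
  Set.centralizer_centralizer_comm_of_comm (fun a ha b hb => (hS a ha b hb).eq) x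
    (Subgroup.closure_le_centralizer_centralizer S hx) y
    (Subgroup.closure_le_centralizer_centralizer S hy)

theorem commutator_le_ker_of_commute {Q : Type*} [Group Q] (f : G →* Q)
    (h : ∀ x y, Commute (f x) (f y)) : commutator G ≤ f.ker := by
  rw [commutator_def, Subgroup.commutator_le]
  intro x _ y _
  rw [MonoidHom.mem_ker, map_commutatorElement, commutatorElement_eq_one_iff_commute]
  exact h x y

end GroupTheory

theorem PresentedGroup.commute_map_of_commute_map_of {α Q : Type*} [Group Q] {rels : Set (FreeGroup α)}
    (f : PresentedGroup rels →* Q) (h : ∀ a b, Commute (f (of a)) (f (of b)))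
    (x y : PresentedGroup rels) : Commute (f x) (f y) := by
  have hmem : ∀ x, f x ∈ Subgroup.closure (Set.range (f ∘ of)) := fun x => by
    rw [Set.range_comp, ← MonoidHom.map_closure, closure_range_of]
    exact ⟨x, trivial, rfl⟩
  refine Subgroup.commute_of_mem_closure ?_ (hmem x) (hmem y)
  rintro _ ⟨a, rfl⟩ _ ⟨b, rfl⟩
  exact h a b

namespace BnRP2

/- ℕ-indexed generators, equal to `1` out of range, so that index shifts stay in `ℕ`. -/
def sigmaNat (n i : ℕ) : BnRP2 n := if h : i < n - 1 then sigma n ⟨i, h⟩ else 1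

def rhoNat (n j : ℕ) : BnRP2 n := if h : j < n then rho n ⟨j, h⟩ else 1

variable {n : ℕ}

@[simp]
theorem mk_of_inl (i : Fin (n - 1)) :
    PresentedGroup.mk (vanBuskirkRels n) (FreeGroup.of (Sum.inl i)) = sigma n i := rfl

@[simp]
theorem mk_of_inr (j : Fin n) :
    PresentedGroup.mk (vanBuskirkRels n) (FreeGroup.of (Sum.inr j)) = rho n j := rfl

theorem sigmaNat_of_lt {i : ℕ} (h : i < n - 1) : sigmaNat n i = sigma n ⟨i, h⟩ := dif_pos h

theorem rhoNat_of_lt {j : ℕ} (h : j < n) : rhoNat n j = rho n ⟨j, h⟩ := dif_pos h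

theorem commute_sigmaNat {i j : ℕ} (hij : i + 2 ≤ j) (hj : j < n - 1) :
    Commute (sigmaNat n i) (sigmaNat n j) := by
  rw [sigmaNat_of_lt (by omega), sigmaNat_of_lt hj, ← commutatorElement_eq_one_iff_commute]
  simpa [commutatorElement_def] using PresentedGroup.one_of_mem (rels := vanBuskirkRels n)
    (Or.inl ⟨⟨i, by omega⟩, ⟨j, hj⟩, Or.inl hij, rfl⟩)

theorem sigmaNat_braid {i : ℕ} (h : i + 1 < n - 1) :
    sigmaNat n i * sigmaNat n (i + 1) * sigmaNat n i
      = sigmaNat n (i + 1) * sigmaNat n i * sigmaNat n (i + 1) := by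
  rw [sigmaNat_of_lt (by omega), sigmaNat_of_lt h, ← mul_inv_eq_one]
  simpa [mul_assoc] using PresentedGroup.one_of_mem (rels := vanBuskirkRels n)
    (Or.inr (Or.inl ⟨i, by omega, h, rfl⟩))

theorem commute_sigmaNat_rhoNat {i j : ℕ} (hi : i < n - 1) (hj : j < n) (hji : j ≠ i)
    (hji' : j ≠ i + 1) : Commute (sigmaNat n i) (rhoNat n j) := by
  rw [sigmaNat_of_lt hi, rhoNat_of_lt hj, ← commutatorElement_eq_one_iff_commute]
  simpa [commutatorElement_def] using PresentedGroup.one_of_mem (rels := vanBuskirkRels n)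
    (Or.inr (Or.inr (Or.inl ⟨⟨i, hi⟩, ⟨j, hj⟩, hji, hji', rfl⟩)))

theorem rhoNat_succ {i : ℕ} (h : i + 1 < n) :
    rhoNat n (i + 1) = (sigmaNat n i)⁻¹ * rhoNat n i * (sigmaNat n i)⁻¹ := by
  have hrel := PresentedGroup.one_of_mem (rels := vanBuskirkRels n)
    (Or.inr (Or.inr (Or.inr (Or.inl ⟨i, by omega, by omega, h, rfl⟩))))
  simp only [map_mul, map_inv, mk_of_inl, mk_of_inr] at hrel
  rw [sigmaNat_of_lt (by omega), rhoNat_of_lt h, rhoNat_of_lt (by omega)]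
  calc rho n ⟨i + 1, h⟩
      = (sigma n ⟨i, by omega⟩)⁻¹ * (sigma n ⟨i, by omega⟩ * rho n ⟨i + 1, h⟩ *
          sigma n ⟨i, by omega⟩ * (rho n ⟨i, by omega⟩)⁻¹) * rho n ⟨i, by omega⟩ *
          (sigma n ⟨i, by omega⟩)⁻¹ := by group
    _ = _ := by rw [hrel, mul_one]

theorem rhoNat_succ_inv_mul_rhoNat_inv_mul {i : ℕ} (h : i + 1 < n) :
    (rhoNat n (i + 1))⁻¹ * (rhoNat n i)⁻¹ * rhoNat n (i + 1) * rhoNat n i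
      = sigmaNat n i ^ 2 := by
  rw [sigmaNat_of_lt (by omega), rhoNat_of_lt h, rhoNat_of_lt (by omega), ← mul_inv_eq_one]
  simpa [mul_assoc] using PresentedGroup.one_of_mem (rels := vanBuskirkRels n)
    (Or.inr (Or.inr (Or.inr (Or.inr (Or.inl ⟨i, by omega, by omega, h, rfl⟩)))))

theorem sigmaNat_mul_inv_sigmaNat_zero_mem_commutator {i : ℕ} (hi : i < n - 1) :
    sigmaNat n i * (sigmaNat n 0)⁻¹ ∈ commutator (BnRP2 n) := by
  induction i with
  | zero => simp
  | succ i ih =>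
    simpa [mul_assoc] using Subgroup.mul_mem _
      (mul_inv_mem_commutator_of_braid (sigmaNat_braid hi)) (ih (by omega))

section Image

variable {Q : Type*} [Group Q] (f : BnRP2 n →* Q)

theorem commute_map_sigmaNat_zero_one (hn : 5 ≤ n)
    (hf : ∀ a ∈ commutator (BnRP2 n), ∀ b ∈ commutator (BnRP2 n), Commute (f a) (f b)) :
    Commute (f (sigmaNat n 0)) (f (sigmaNat n 1)) := by
  have h03 := (commute_sigmaNat (n := n) (i := 0) (j := 3) le_add_self (by omega)).map f
  have h13 := (commute_sigmaNat (n := n) (i := 1) (j := 3) le_rfl (by omega)).map f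
  refine commute_of_commute_mul_inv h03.symm h13.symm ?_
  simpa using hf _ (inv_mem (sigmaNat_mul_inv_sigmaNat_zero_mem_commutator (i := 1) (by omega)))
    _ (sigmaNat_mul_inv_sigmaNat_zero_mem_commutator (i := 3) (by omega))

theorem map_sigmaNat_eq_of_commute (hc : Commute (f (sigmaNat n 0)) (f (sigmaNat n 1))) :
    ∀ i < n - 1, f (sigmaNat n i) = f (sigmaNat n 0) := by
  have hb (i : ℕ) (hi : i + 1 < n - 1) :
      f (sigmaNat n i) * f (sigmaNat n (i + 1)) * f (sigmaNat n i)
        = f (sigmaNat n (i + 1)) * f (sigmaNat n i) * f (sigmaNat n (i + 1)) := by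
    simpa only [map_mul] using congrArg f (sigmaNat_braid hi)
  have hsucc : ∀ i, i + 1 < n - 1 → f (sigmaNat n i) = f (sigmaNat n (i + 1)) := by
    intro i hi
    induction i with
    | zero => exact eq_of_commute_of_braid hc (hb 0 hi)
    | succ i ih =>
      refine eq_of_commute_of_braid ?_ (hb _ hi)
      rw [← ih (by omega)]
      exact (commute_sigmaNat le_rfl hi).map f
  intro i hi
  induction i with
  | zero => rfl
  | succ i ih => rw [← hsucc i hi, ih (by omega)]

variable {z : Q} (hσ : ∀ i < n - 1, f (sigmaNat n i) = z)
include hσ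

theorem commute_map_rhoNat (h4 : 4 ≤ n) {j : ℕ} (hj : j < n) : Commute z (f (rhoNat n j)) := by
  obtain ⟨i, hi, hji, hji'⟩ : ∃ i < n - 1, j ≠ i ∧ j ≠ i + 1 := by
    by_cases h : 2 ≤ j
    exacts [⟨0, by omega, by omega, by omega⟩, ⟨2, by omega, by omega, by omega⟩]
  rw [← hσ i hi]
  exact (commute_sigmaNat_rhoNat hi hj hji hji').map f

theorem sq_eq_one_of_map_sigmaNat_eq (h4 : 4 ≤ n) : z ^ 2 = 1 := by
  have hz0 := commute_map_rhoNat f hσ h4 (j := 0) (by omega)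
  have h1 : f (rhoNat n 1) = z⁻¹ * f (rhoNat n 0) * z⁻¹ := by
    simpa [hσ 0 (by omega)] using congrArg f (rhoNat_succ (n := n) (i := 0) (by omega))
  have hc : Commute (f (rhoNat n 1)) (f (rhoNat n 0)) := by
    rw [h1]
    exact (hz0.inv_left.mul_left (.refl _)).mul_left hz0.inv_left
  have hrel := congrArg f (rhoNat_succ_inv_mul_rhoNat_inv_mul (n := n) (i := 0) (by omega))
  simp only [map_mul, map_inv, map_pow, hσ 0 (by omega), zero_add] at hrel
  rw [← hrel, mul_assoc _ (f (rhoNat n 1)), hc.eq]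
  group

theorem map_rhoNat_eq_of_map_sigmaNat_eq (h4 : 4 ≤ n) {j : ℕ} (hj : j < n) :
    f (rhoNat n j) = f (rhoNat n 0) := by
  induction j with
  | zero => rfl
  | succ j ih =>
    have hc := (commute_map_rhoNat f hσ h4 (j := j) (by omega)).inv_left
    calc f (rhoNat n (j + 1)) = z⁻¹ * f (rhoNat n j) * z⁻¹ := by
          simpa [hσ j (by omega)] using congrArg f (rhoNat_succ hj)
      _ = f (rhoNat n j) * (z ^ 2)⁻¹ := by rw [hc.eq]; group
      _ = f (rhoNat n 0) := by
          rw [sq_eq_one_of_map_sigmaNat_eq f hσ h4, inv_one, mul_one, ih (by omega)]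

theorem commute_map_of_map_sigmaNat_eq (h4 : 4 ≤ n) (x y : BnRP2 n) : Commute (f x) (f y) := by
  have hgen : ∀ a, f (PresentedGroup.of a) = z ∨ f (PresentedGroup.of a) = f (rhoNat n 0) := by
    rintro (i | j)
    · exact .inl (by rw [← hσ i i.2, sigmaNat_of_lt i.2]; rfl)
    · exact .inr (by rw [← map_rhoNat_eq_of_map_sigmaNat_eq f hσ h4 j.2, rhoNat_of_lt j.2]; rfl)
  have hzr := commute_map_rhoNat f hσ h4 (j := 0) (by omega)
  refine PresentedGroup.commute_map_of_commute_map_of f (fun a b => ?_) x y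
  rcases hgen a with ha | ha <;> rcases hgen b with hb | hb <;>
    simp only [ha, hb, hzr, hzr.symm, Commute.refl]

end Image

theorem commutator_commutator_eq (hn : 5 ≤ n) :
    ⁅commutator (BnRP2 n), commutator (BnRP2 n)⁆ = commutator (BnRP2 n) := by
  refine le_antisymm (Subgroup.commutator_le_left _ _) ?_
  set f := QuotientGroup.mk' ⁅commutator (BnRP2 n), commutator (BnRP2 n)⁆
  have hf : ∀ a ∈ commutator (BnRP2 n), ∀ b ∈ commutator (BnRP2 n), Commute (f a) (f b) := by
    intro a ha b hb
    rw [← commutatorElement_eq_one_iff_commute, ← map_commutatorElement, QuotientGroup.mk'_apply,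
      QuotientGroup.eq_one_iff]
    exact Subgroup.commutator_mem_commutator ha hb
  have hσ := map_sigmaNat_eq_of_commute f (commute_map_sigmaNat_zero_one f hn hf)
  simpa [f] using commutator_le_ker_of_commute f (commute_map_of_map_sigmaNat_eq f hσ (by omega))

end BnRP2

theorem commutator_BnRP2_perfect_general (n : ℕ) (hn : 5 ≤ n) (H : Subgroup (BnRP2 n))
    (hle : H ≤ commutator (BnRP2 n))
    (hab : ⁅commutator (BnRP2 n), commutator (BnRP2 n)⁆ ≤ H) :
    H = commutator (BnRP2 n) ∧
      derivedSeries (BnRP2 n) 2 = derivedSeries (BnRP2 n) 1 := by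
  have hperfect := BnRP2.commutator_commutator_eq hn
  refine ⟨le_antisymm hle (hperfect ▸ hab), ?_⟩
  rw [derivedSeries_succ, derivedSeries_one, hperfect]

/-- For `n ≥ 5`: if `H` is a normal subgroup of `B_n(ℝP²)` contained in the commutator
subgroup such that `(B_n(ℝP²))⁽¹⁾/H` is abelian (equivalently
`⁅(B_n(ℝP²))⁽¹⁾, (B_n(ℝP²))⁽¹⁾⁆ ≤ H`), then `H = (B_n(ℝP²))⁽¹⁾`. In particular
`(B_n(ℝP²))⁽²⁾ = (B_n(ℝP²))⁽¹⁾`, i.e. the commutator subgroup is perfect. -/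
theorem commutator_BnRP2_perfect (n : ℕ) (hn : 5 ≤ n) (H : Subgroup (BnRP2 n))
    (hnorm : H.Normal) (hle : H ≤ commutator (BnRP2 n))
    (hab : ⁅commutator (BnRP2 n), commutator (BnRP2 n)⁆ ≤ H) :
    H = commutator (BnRP2 n) ∧
      derivedSeries (BnRP2 n) 2 = derivedSeries (BnRP2 n) 1 :=
  commutator_BnRP2_perfect_general n hn H hle hab
end

section
/- The quotient B₃(ℝP²)/(B₃(ℝP²))^{(2)} of the braid group of the projective plane on 3 strings by the second derived subgroup is isomorphic to the dihedral group D₁₂ of order 12. -/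
instance : (derivedSeries (BnRP2 3) 2).Normal := derivedSeries_normal _ _

/-! The quotient `M` is metabelian, so its derived subgroup `M'` is an abelian group on which `M`
acts by conjugation through `Mᵃᵇ ≅ (ℤ/2)²`, generated by the common image of `σ₁, σ₂` and the common
image of `ρ₁, ρ₂, ρ₃`. Read in the module `M'`, the defining relations force `ρ₁ = ρ₂ = ρ₃`,
`σ₁² = 1` and `(σ₁⁻¹σ₂)³ = 1`. Hence `t = ρ₁σ₂σ₁` satisfies `t⁶ = 1` and `σ₁tσ₁⁻¹ = t⁻¹`, which
gives a homomorphism `D₁₂ → M` inverse to `σ₁ ↦ s, σ₂ ↦ sr², ρᵢ ↦ r³`; the latter is defined on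
`M` because `D₁₂` is metabelian. -/

open scoped IsMulCommutative commutatorElement

section Metabelian

variable {G H : Type*} [Group G] [Group H]

theorem derivedSeries_two_eq_bot_iff :
    derivedSeries G 2 = ⊥ ↔ IsMulCommutative (commutator G) := by
  rw [derivedSeries_succ, derivedSeries_one, Subgroup.commutator_self_eq_bot_iff]

theorem derivedSeries_quotient_derivedSeries_eq_bot (n : ℕ) :
    derivedSeries (G ⧸ derivedSeries G n) n = ⊥ := by
  rw [← map_derivedSeries_eq (QuotientGroup.mk'_surjective _), Subgroup.map_eq_bot_iff,
    QuotientGroup.ker_mk']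

instance : IsMulCommutative (commutator (G ⧸ derivedSeries G 2)) :=
  derivedSeries_two_eq_bot_iff.mp (derivedSeries_quotient_derivedSeries_eq_bot 2)

theorem derivedSeries_two_le_ker [IsMulCommutative (commutator H)] (φ : G →* H) :
    derivedSeries G 2 ≤ φ.ker := by
  rw [← Subgroup.map_eq_bot_iff, ← le_bot_iff, (derivedSeries_two_eq_bot_iff.mpr ‹_›).symm]
  exact map_derivedSeries_le_derivedSeries φ 2

theorem Abelianization.of_eq_of_iff {a b : G} : of a = of b ↔ a⁻¹ * b ∈ commutator G :=
  QuotientGroup.eq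

/-- Conjugation on the abelian group `G'` factors through `G ⧸ G' = Gᵃᵇ`. -/
def commutatorConjAct [IsMulCommutative (commutator G)] :
    Abelianization G →* MulAut (commutator G) :=
  QuotientGroup.lift _ MulAut.conjNormal fun n hn ↦ MulEquiv.ext fun p ↦ Subtype.ext <| by
    simp [setLike_mul_comm hn p.2]

end Metabelian

theorem Subgroup.additive_ext_iff {G : Type*} [Group G] {N : Subgroup G} {u v : Additive N} :
    u = v ↔ (u.toMul : G) = v.toMul :=
  Additive.toMul.injective.eq_iff.symm.trans Subtype.ext_iff

section CommutatorModule

variable {M : Type*} [Group M] [IsMulCommutative (commutator M)]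

def commutatorConjAdd (g : M) : Additive (commutator M) →+ Additive (commutator M) :=
  MonoidHom.toAdditive (commutatorConjAct (Abelianization.of g)).toMonoidHom

theorem commutatorConjAdd_eq_of_of_eq {g h : M} (hgh : Abelianization.of g = .of h) :
    commutatorConjAdd g = commutatorConjAdd h := by
  rw [commutatorConjAdd, hgh, commutatorConjAdd]

theorem commutatorConjAdd_involutive {g : M} (hg : Abelianization.of g ^ 2 = 1) :
    Function.Involutive (commutatorConjAdd g) := fun v ↦ by
  show .ofMul ((commutatorConjAct (.of g) * commutatorConjAct (.of g)) v.toMul) = v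
  rw [← map_mul, ← pow_two, hg, map_one]
  rfl

theorem commutatorConjAdd_inv {g : M} (hg : Abelianization.of g ^ 2 = 1) :
    commutatorConjAdd g⁻¹ = commutatorConjAdd g :=
  commutatorConjAdd_eq_of_of_eq <| by
    rw [map_inv]; exact inv_eq_of_mul_eq_one_right ((pow_two _).symm.trans hg)

def commutatorAdd (a x : M) : Additive (commutator M) :=
  .ofMul ⟨⁅a, x⁆, Subgroup.commutator_mem_commutator (Subgroup.mem_top a) (Subgroup.mem_top x)⟩

end CommutatorModule

namespace DihedralGroup

variable {n : ℕ} {G : Type*} [Group G]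

theorem r_mem_zpowers_r_one (i : ZMod n) : r i ∈ Subgroup.zpowers (r 1 : DihedralGroup n) :=
  ⟨i.cast, by simp⟩

theorem commutator_le_zpowers_r_one : commutator (DihedralGroup n) ≤ Subgroup.zpowers (r 1) := by
  refine Subgroup.commutator_le.mpr fun g _ h _ ↦ ?_
  rcases g with i | i <;> rcases h with j | j <;>
    simp only [commutatorElement_def, r_mul_r, r_mul_sr, sr_mul_r, sr_mul_sr, inv_r, inv_sr] <;>
    exact r_mem_zpowers_r_one _

instance : IsMulCommutative (commutator (DihedralGroup n)) :=
  IsMulCommutative.of_setLike_mul_comm fun _ hp _ hq ↦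
    setLike_mul_comm (commutator_le_zpowers_r_one hp) (commutator_le_zpowers_r_one hq)

theorem pow_val_add [NeZero n] {r : G} (hr : r ^ n = 1) (i j : ZMod n) :
    r ^ (i + j).val = r ^ i.val * r ^ j.val := by
  rw [ZMod.val_add, ← pow_eq_pow_mod _ hr, pow_add]

theorem pow_val_sub [NeZero n] {r : G} (hr : r ^ n = 1) (i j : ZMod n) :
    r ^ (j - i).val = (r ^ i.val)⁻¹ * r ^ j.val :=
  eq_inv_mul_iff_mul_eq.mpr (by rw [← pow_val_add hr, add_sub_cancel])

theorem pow_mul_of_conj {r s : G} (hs : s ^ 2 = 1) (hsr : s * r * s⁻¹ = r⁻¹) (k : ℕ) :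
    r ^ k * s = s * (r ^ k)⁻¹ := by
  have hs' : s⁻¹ = s := inv_eq_of_mul_eq_one_right ((pow_two s).symm.trans hs)
  rw [← inv_pow, ← hsr, conj_pow, ← mul_assoc, ← mul_assoc, ← pow_two, hs, one_mul, hs']

def lift [NeZero n] (r s : G) (hr : r ^ n = 1) (hs : s ^ 2 = 1) (hsr : s * r * s⁻¹ = r⁻¹) :
    DihedralGroup n →* G where
  toFun
    | .r i => r ^ i.val
    | .sr i => s * r ^ i.val
  map_one' := by
    show r ^ (0 : ZMod n).val = 1
    rw [ZMod.val_zero, pow_zero]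
  map_mul' := by
    rintro (i | i) (j | j)
    · exact pow_val_add hr i j
    · show s * r ^ (j - i).val = r ^ i.val * (s * r ^ j.val)
      rw [pow_val_sub hr, ← mul_assoc, ← mul_assoc, pow_mul_of_conj hs hsr]
    · show s * r ^ (i + j).val = s * r ^ i.val * r ^ j.val
      rw [pow_val_add hr, mul_assoc]
    · show r ^ (j - i).val = s * r ^ i.val * (s * r ^ j.val)
      rw [pow_val_sub hr, ← mul_assoc, mul_assoc s, pow_mul_of_conj hs hsr, ← mul_assoc,
        ← pow_two, hs, one_mul]

@[simp]
theorem lift_r [NeZero n] (r s : G) (hr : r ^ n = 1) (hs : s ^ 2 = 1) (hsr : s * r * s⁻¹ = r⁻¹)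
    (i : ZMod n) : lift r s hr hs hsr (.r i) = r ^ i.val :=
  rfl

@[simp]
theorem lift_sr [NeZero n] (r s : G) (hr : r ^ n = 1) (hs : s ^ 2 = 1) (hsr : s * r * s⁻¹ = r⁻¹)
    (i : ZMod n) : lift r s hr hs hsr (.sr i) = s * r ^ i.val :=
  rfl

theorem hom_ext [NeZero n] {f g : DihedralGroup n →* G} (hr : f (r 1) = g (r 1))
    (hs : f (sr 0) = g (sr 0)) : f = g := by
  have hr' (i : ZMod n) : f (r i) = g (r i) := by
    rw [← ZMod.natCast_zmod_val i, ← r_one_pow, map_pow, map_pow, hr]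
  ext (i | i)
  · exact hr' i
  · rw [← zero_add i, ← sr_mul_r, map_mul, map_mul, hs, hr']

end DihedralGroup

/-- The defining relations of `B₃(ℝP²)` satisfied by `a, b, x, y, z` in place of
`σ₁, σ₂, ρ₁, ρ₂, ρ₃`. -/
structure B3RP2Relations {H : Type*} [Group H] (a b x y z : H) : Prop where
  braid : a * b * a = b * a * b
  commute_a_z : a * z = z * a
  commute_b_x : b * x = x * b
  x_eq : x = a * y * a
  y_eq : y = b * z * b
  commutator_y_x : y⁻¹ * x⁻¹ * y * x = a ^ 2
  commutator_z_y : z⁻¹ * y⁻¹ * z * y = b ^ 2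
  sq_x : x ^ 2 = a * b ^ 2 * a

namespace B3RP2Relations

section Presentation

variable {H : Type*} [Group H] {f : Fin 2 ⊕ Fin 3 → H}

theorem lift_eq_one
    (h : B3RP2Relations (f (.inl 0)) (f (.inl 1)) (f (.inr 0)) (f (.inr 1)) (f (.inr 2))) :
    ∀ w ∈ vanBuskirkRels 3, FreeGroup.lift f w = 1 := by
  rintro w (⟨i, j, hij, rfl⟩ | ⟨i, hi, hi', rfl⟩ | ⟨i, j, hji, hji', rfl⟩ |
      ⟨i, hi, -, hi', rfl⟩ | ⟨i, hi, -, hi', rfl⟩ | ⟨_, rfl⟩)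
  · omega
  · obtain rfl : i = 0 := by omega
    simp only [map_mul, map_inv, FreeGroup.lift_apply_of, Fin.zero_eta, zero_add, Fin.mk_one]
    rw [h.braid]; group
  · obtain ⟨rfl, rfl⟩ | ⟨rfl, rfl⟩ : i = 0 ∧ j = 2 ∨ i = 1 ∧ j = 0 := by decide +revert
    all_goals simp only [map_mul, map_inv, FreeGroup.lift_apply_of]
    · rw [h.commute_a_z]; group
    · rw [h.commute_b_x]; group
  · obtain rfl | rfl : i = 0 ∨ i = 1 := by omega
    all_goals simp only [map_mul, map_inv, FreeGroup.lift_apply_of, Fin.zero_eta, Fin.mk_one,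
      Fin.reduceFinMk, Fin.isValue, zero_add, Nat.reduceAdd]
    · rw [← h.x_eq, mul_inv_cancel]
    · rw [← h.y_eq, mul_inv_cancel]
  · obtain rfl | rfl : i = 0 ∨ i = 1 := by omega
    all_goals simp only [map_mul, map_inv, map_pow, FreeGroup.lift_apply_of, Fin.zero_eta,
      Fin.mk_one, Fin.reduceFinMk, Fin.isValue, zero_add, Nat.reduceAdd]
    · rw [h.commutator_y_x]; group
    · rw [h.commutator_z_y]; group
  · show FreeGroup.lift f (.of (.inr 0) ^ 2 *
      (.of (.inl 0) * .of (.inl 1) * (.of (.inl 1) * .of (.inl 0)))⁻¹) = 1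
    simp only [map_mul, map_inv, map_pow, FreeGroup.lift_apply_of]
    rw [h.sq_x]; group

theorem of_lift_eq_one (hf : ∀ w ∈ vanBuskirkRels 3, FreeGroup.lift f w = 1) :
    B3RP2Relations (f (.inl 0)) (f (.inl 1)) (f (.inr 0)) (f (.inr 1)) (f (.inr 2)) := by
  have h₁ := hf _ (.inr (.inl ⟨0, by decide, by decide, rfl⟩))
  have h₂ := hf _ (.inr (.inr (.inl ⟨0, 2, by decide, by decide, rfl⟩)))
  have h₃ := hf _ (.inr (.inr (.inl ⟨1, 0, by decide, by decide, rfl⟩)))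
  have h₄ := hf _ (.inr (.inr (.inr (.inl ⟨0, by decide, by decide, by decide, rfl⟩))))
  have h₅ := hf _ (.inr (.inr (.inr (.inl ⟨1, by decide, by decide, by decide, rfl⟩))))
  have h₆ := hf _ (.inr (.inr (.inr (.inr (.inl ⟨0, by decide, by decide, by decide, rfl⟩)))))
  have h₇ := hf _ (.inr (.inr (.inr (.inr (.inl ⟨1, by decide, by decide, by decide, rfl⟩)))))
  have h₈ := hf (.of (.inr 0) ^ 2 * (.of (.inl 0) * .of (.inl 1) * (.of (.inl 1) * .of (.inl 0)))⁻¹)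
    (.inr (.inr (.inr (.inr (.inr ⟨by decide, rfl⟩)))))
  simp only [map_mul, map_inv, map_pow, FreeGroup.lift_apply_of, Fin.zero_eta, Fin.mk_one,
    Fin.reduceFinMk, Fin.isValue, zero_add, Nat.reduceAdd] at h₁ h₂ h₃ h₄ h₅ h₆ h₇ h₈
  constructor
  · rw [← mul_inv_eq_one, ← h₁]; group
  · rw [← mul_inv_eq_one, ← h₂]; group
  · rw [← mul_inv_eq_one, ← h₃]; group
  · rw [eq_comm, ← mul_inv_eq_one, h₄]
  · rw [eq_comm, ← mul_inv_eq_one, h₅]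
  · rw [← mul_inv_eq_one, ← h₆]; group
  · rw [← mul_inv_eq_one, ← h₇]; group
  · rw [← mul_inv_eq_one, ← h₈]; group

end Presentation

theorem map {H K : Type*} [Group H] [Group K] {a b x y z : H} (h : B3RP2Relations a b x y z)
    (φ : H →* K) : B3RP2Relations (φ a) (φ b) (φ x) (φ y) (φ z) := by
  constructor <;> simp only [← map_mul, ← map_inv, ← map_pow]
  exacts [congrArg φ h.braid, congrArg φ h.commute_a_z, congrArg φ h.commute_b_x,
    congrArg φ h.x_eq, congrArg φ h.y_eq, congrArg φ h.commutator_y_x,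
    congrArg φ h.commutator_z_y, congrArg φ h.sq_x]

theorem eq_of_commGroup {C : Type*} [CommGroup C] {a b x y z : C} (h : B3RP2Relations a b x y z) :
    b = a ∧ a ^ 2 = 1 ∧ x ^ 2 = 1 ∧ y = x ∧ z = x := by
  have hba : b = a := by simpa [mul_comm, mul_left_comm] using h.braid.symm
  have ha2 : a ^ 2 = 1 := by simpa [mul_comm] using h.commutator_y_x.symm
  have hb2 : b ^ 2 = 1 := by simpa [mul_comm] using h.commutator_z_y.symm
  have hyx : y = x := by rw [h.x_eq, mul_right_comm, ← pow_two, ha2, one_mul]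
  have hzy : z = y := by rw [h.y_eq, mul_right_comm, ← pow_two, hb2, one_mul]
  have hx2 : x ^ 2 = 1 := by rw [h.sq_x, hba, mul_right_comm, ← pow_two, ha2, one_mul]
  exact ⟨hba, ha2, hx2, hyx, hzy.trans hyx⟩

/-- The relations that `B3RP2Relations` imposes on `d = a⁻¹b`, `e = x⁻¹y`, `f = x⁻¹z`,
`k = ⁅a, x⁆` and `s = a²` in the abelian group `M'`, with `σ, τ` conjugation by `a` and `x`. -/
theorem eq_zero_of_module_relations {V : Type*} [AddCommGroup V] {σ τ : V →+ V}
    (hσ : Function.Involutive σ) (hτ : Function.Involutive τ)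
    {d e f k s : V} (h₁ : σ d = 2 • d) (h₂ : σ (τ f) = τ f - k) (h₃ : τ d = σ k + d)
    (h₄ : -s = σ (τ k) + e) (h₅ : e = τ k + s + σ (τ d) + σ f + d) (h₆ : s = -e + τ e)
    (h₇ : s + σ d + d = -f - τ e + τ f + e) (h₈ : σ s = s) :
    3 • d = 0 ∧ e = 0 ∧ f = 0 ∧ s = 0 := by
  have hd : 3 • d = 0 := by
    have := congrArg σ h₁
    rw [hσ, map_nsmul, h₁] at this
    linear_combination (norm := module) -this
  have hσk : σ k = -k := by
    have := congrArg σ h₂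
    rw [hσ, map_sub, h₂] at this
    linear_combination (norm := module) this
  have hk : k = d - τ d := by linear_combination (norm := module) h₃ + hσk
  have hτk : τ k = -k := by rw [hk, map_sub, hτ, neg_sub]
  have hτe : τ e = -k := by
    rw [hτk, map_neg, hσk, neg_neg] at h₄
    linear_combination (norm := module) -h₄ - h₆
  have he : e = k := by rw [← hτ e, hτe, map_neg, hτk, neg_neg]
  have hs : s = -2 • k := by linear_combination (norm := module) h₆ + hτe - he
  -- `σ` fixes `s = -2k` but negates `k`, so `4k = 0`; and `3k = 0` since `k = d - τ d`.
  have hk0 : k = 0 := by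
    rw [hs, map_zsmul, hσk] at h₈
    have h3k : 3 • k = 0 := by rw [hk, smul_sub, ← map_nsmul, hd, map_zero, sub_zero]
    linear_combination (norm := module) h₈ - h3k
  have he0 : e = 0 := he.trans hk0
  have hs0 : s = 0 := by rw [hs, hk0, smul_zero]
  have hτf : τ f = f := by
    rw [hs0, he0, map_zero, h₁] at h₇
    linear_combination (norm := module) -h₇ + hd
  have hσf : σ f = f := by rwa [hτf, hk0, sub_zero] at h₂
  have hτd : τ d = d := by rw [h₃, hk0, map_zero, zero_add]
  have hf : f = 0 := by
    rw [he0, hk0, hs0, hτd, h₁, hσf, map_zero] at h₅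
    linear_combination (norm := module) -h₅ - hd
  exact ⟨hd, he0, hf, hs0⟩

section Metabelian

variable {M : Type*} [Group M] {a b x y z : M}

theorem of_sq_a (h : B3RP2Relations a b x y z) : Abelianization.of a ^ 2 = 1 :=
  (h.map _).eq_of_commGroup.2.1

theorem of_sq_x (h : B3RP2Relations a b x y z) : Abelianization.of x ^ 2 = 1 :=
  (h.map _).eq_of_commGroup.2.2.1

def d (h : B3RP2Relations a b x y z) : Additive (commutator M) :=
  .ofMul ⟨a⁻¹ * b, Abelianization.of_eq_of_iff.mp (h.map _).eq_of_commGroup.1.symm⟩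

def e (h : B3RP2Relations a b x y z) : Additive (commutator M) :=
  .ofMul ⟨x⁻¹ * y, Abelianization.of_eq_of_iff.mp (h.map _).eq_of_commGroup.2.2.2.1.symm⟩

def f (h : B3RP2Relations a b x y z) : Additive (commutator M) :=
  .ofMul ⟨x⁻¹ * z, Abelianization.of_eq_of_iff.mp (h.map _).eq_of_commGroup.2.2.2.2.symm⟩

def s (h : B3RP2Relations a b x y z) : Additive (commutator M) :=
  .ofMul ⟨a ^ 2, by rw [← Abelianization.ker_of, MonoidHom.mem_ker, map_pow, h.of_sq_a]⟩

variable [IsMulCommutative (commutator M)] (h : B3RP2Relations a b x y z)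

theorem conj_a_d : commutatorConjAdd a h.d = 2 • h.d := by
  rw [Subgroup.additive_ext_iff]
  show a * (a⁻¹ * b) * a⁻¹ = (a⁻¹ * b) ^ 2
  have hc : a ^ 2 * b = b * a ^ 2 := by
    have hsd : a ^ 2 * (a⁻¹ * b) = a⁻¹ * b * a ^ 2 :=
      setLike_mul_comm (h.s.toMul).2 (h.d.toMul).2
    calc a ^ 2 * b = a * (a ^ 2 * (a⁻¹ * b)) := by group
      _ = b * a ^ 2 := by rw [hsd]; group
  calc a * (a⁻¹ * b) * a⁻¹
      = (a ^ 2)⁻¹ * (a ^ 2 * b) * a⁻¹ := by group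
    _ = (a ^ 3)⁻¹ * (a * b * a) := by rw [hc]; group
    _ = (a ^ 3)⁻¹ * (b * a * b) := by rw [h.braid]
    _ = a⁻¹ * a⁻¹ * a⁻¹ * (b * a ^ 2) * a⁻¹ * b := by group
    _ = (a⁻¹ * b) ^ 2 := by rw [← hc, pow_two (a⁻¹ * b)]; group

theorem conj_a_conj_x_f : commutatorConjAdd a (commutatorConjAdd x h.f) =
    commutatorConjAdd x h.f - commutatorAdd a x := by
  rw [Subgroup.additive_ext_iff]
  show a * (x * (x⁻¹ * z) * x⁻¹) * a⁻¹ = x * (x⁻¹ * z) * x⁻¹ / ⁅a, x⁆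
  rw [show a * (x * (x⁻¹ * z) * x⁻¹) * a⁻¹ = a * z * x⁻¹ * a⁻¹ by group, h.commute_a_z,
    div_eq_mul_inv]
  group

theorem conj_x_d : commutatorConjAdd x h.d = commutatorConjAdd a (commutatorAdd a x) + h.d := by
  rw [← commutatorConjAdd_inv h.of_sq_a, Subgroup.additive_ext_iff]
  show x * (a⁻¹ * b) * x⁻¹ = a⁻¹ * ⁅a, x⁆ * a⁻¹⁻¹ * (a⁻¹ * b)
  rw [show x * (a⁻¹ * b) * x⁻¹ = x * a⁻¹ * x⁻¹ * (x * b * x⁻¹) by group, ← h.commute_b_x]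
  group

theorem neg_s_eq :
    -h.s = commutatorConjAdd a (commutatorConjAdd x (commutatorAdd a x)) + h.e := by
  rw [← commutatorConjAdd_inv h.of_sq_a, ← commutatorConjAdd_inv h.of_sq_x,
    Subgroup.additive_ext_iff]
  show (a ^ 2)⁻¹ = a⁻¹ * (x⁻¹ * ⁅a, x⁆ * x⁻¹⁻¹) * a⁻¹⁻¹ * (x⁻¹ * y)
  rw [h.x_eq]; group

theorem e_eq : h.e = commutatorConjAdd x (commutatorAdd a x) + h.s +
    commutatorConjAdd a (commutatorConjAdd x h.d) + commutatorConjAdd a h.f + h.d := by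
  rw [← commutatorConjAdd_inv h.of_sq_a, ← commutatorConjAdd_inv h.of_sq_x,
    Subgroup.additive_ext_iff]
  show x⁻¹ * y = x⁻¹ * ⁅a, x⁆ * x⁻¹⁻¹ * a ^ 2 * (a⁻¹ * (x⁻¹ * (a⁻¹ * b) * x⁻¹⁻¹) * a⁻¹⁻¹) *
    (a⁻¹ * (x⁻¹ * z) * a⁻¹⁻¹) * (a⁻¹ * b)
  rw [h.y_eq]; group

theorem s_eq : h.s = -h.e + commutatorConjAdd x h.e := by
  rw [← commutatorConjAdd_inv h.of_sq_x, Subgroup.additive_ext_iff]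
  show a ^ 2 = (x⁻¹ * y)⁻¹ * (x⁻¹ * (x⁻¹ * y) * x⁻¹⁻¹)
  rw [← h.commutator_y_x]; group

theorem s_add_eq : h.s + commutatorConjAdd a h.d + h.d =
    -h.f - commutatorConjAdd x h.e + commutatorConjAdd x h.f + h.e := by
  rw [← commutatorConjAdd_inv h.of_sq_a, ← commutatorConjAdd_inv h.of_sq_x,
    Subgroup.additive_ext_iff]
  show a ^ 2 * (a⁻¹ * (a⁻¹ * b) * a⁻¹⁻¹) * (a⁻¹ * b) =
    (x⁻¹ * z)⁻¹ / (x⁻¹ * (x⁻¹ * y) * x⁻¹⁻¹) * (x⁻¹ * (x⁻¹ * z) * x⁻¹⁻¹) * (x⁻¹ * y)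
  rw [show a ^ 2 * (a⁻¹ * (a⁻¹ * b) * a⁻¹⁻¹) * (a⁻¹ * b) = b ^ 2 by rw [pow_two b]; group,
    ← h.commutator_z_y, div_eq_mul_inv]
  group

theorem conj_a_s : commutatorConjAdd a h.s = h.s := by
  rw [Subgroup.additive_ext_iff]
  show a * a ^ 2 * a⁻¹ = a ^ 2
  group

theorem eq_of_metabelian (h : B3RP2Relations a b x y z) :
    (a⁻¹ * b) ^ 3 = 1 ∧ y = x ∧ z = x ∧ a ^ 2 = 1 := by
  obtain ⟨hd, he, hf, hs⟩ := eq_zero_of_module_relations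
    (commutatorConjAdd_involutive h.of_sq_a) (commutatorConjAdd_involutive h.of_sq_x)
    h.conj_a_d h.conj_a_conj_x_f h.conj_x_d h.neg_s_eq h.e_eq h.s_eq h.s_add_eq h.conj_a_s
  rw [Subgroup.additive_ext_iff] at hd he hf hs
  exact ⟨hd, (inv_mul_eq_one.mp he).symm, (inv_mul_eq_one.mp hf).symm, hs⟩

theorem dihedral_relations (h : B3RP2Relations a b x y z) :
    (x * b * a) ^ 6 = 1 ∧ a ^ 2 = 1 ∧ a * (x * b * a) * a⁻¹ = (x * b * a)⁻¹ ∧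
      a * (x * b * a) ^ 2 = b ∧ (x * b * a) ^ 3 = x ∧ y = x ∧ z = x := by
  obtain ⟨hd, hyx, hzx, ha⟩ := h.eq_of_metabelian
  have ha' : a⁻¹ = a := inv_eq_of_mul_eq_one_right ((pow_two a).symm.trans ha)
  have hb : b ^ 2 = 1 := by rw [← h.commutator_z_y, hzx, hyx]; group
  have hb' : b⁻¹ = b := inv_eq_of_mul_eq_one_right ((pow_two b).symm.trans hb)
  have hx : x ^ 2 = 1 := by rw [h.sq_x, hb, mul_one, ← pow_two, ha]
  have hx' : x⁻¹ = x := inv_eq_of_mul_eq_one_right ((pow_two x).symm.trans hx)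
  have hxba : Commute x (b * a) :=
    Commute.mul_right h.commute_b_x.symm (hzx ▸ h.commute_a_z).symm
  have hba : (b * a) ^ 3 = 1 := by
    rw [show b * a = (a⁻¹ * b)⁻¹ by rw [mul_inv_rev, inv_inv, hb'], inv_pow, hd, inv_one]
  have h3 : (x * b * a) ^ 3 = x := by
    rw [mul_assoc, hxba.mul_pow, hba, mul_one, pow_succ, hx, one_mul]
  refine ⟨by rw [show 6 = 3 * 2 from rfl, pow_mul, h3, hx], ha, ?_, ?_, h3, hyx, hzx⟩
  · calc a * (x * b * a) * a⁻¹ = a * (x * b) := by group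
      _ = (x * b * a)⁻¹ := by rw [mul_inv_rev, mul_inv_rev, ha', hb', hx', h.commute_b_x]
  · have ht2 : (x * b * a) ^ 2 = (b * a) ^ 2 := by rw [mul_assoc x, hxba.mul_pow, hx, one_mul]
    calc a * (x * b * a) ^ 2 = b⁻¹ * (b * a) ^ 3 := by
          rw [ht2]; simp only [pow_succ, pow_zero, one_mul]; group
      _ = b := by rw [hba, mul_one, hb']

end Metabelian

end B3RP2Relations

theorem PresentedGroup.lift_of_eq_mk {α : Type*} (rels : Set (FreeGroup α)) :
    FreeGroup.lift (PresentedGroup.of (rels := rels)) = PresentedGroup.mk rels :=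
  FreeGroup.ext_hom _ _ fun _ ↦ rfl

theorem B3RP2Relations.generators :
    B3RP2Relations (BnRP2.sigma 3 0) (BnRP2.sigma 3 1) (BnRP2.rho 3 0) (BnRP2.rho 3 1)
      (BnRP2.rho 3 2) :=
  of_lift_eq_one fun w hw ↦ by
    rw [PresentedGroup.lift_of_eq_mk]; exact PresentedGroup.one_of_mem hw

def BnRP2.threeToDihedral : BnRP2 3 →* DihedralGroup 6 :=
  PresentedGroup.toGroup <| B3RP2Relations.lift_eq_one
    (f := Sum.elim ![.sr 0, .sr 2] fun _ ↦ .r 3) (by constructor <;> decide)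

/-- The quotient of the braid group `B₃(ℝP²)` by its second derived subgroup is isomorphic to
the dihedral group `D₁₂` of order 12 (`DihedralGroup 6`). -/
theorem B3RP2_mod_second_derived_eq_D12 :
    Nonempty ((BnRP2 3 ⧸ derivedSeries (BnRP2 3) 2) ≃* DihedralGroup 6) := by
  let π := QuotientGroup.mk' (derivedSeries (BnRP2 3) 2)
  obtain ⟨h6, ha, hconj, hb, hx, hy, hz⟩ := (B3RP2Relations.generators.map π).dihedral_relations
  let φ := QuotientGroup.lift _ BnRP2.threeToDihedral (derivedSeries_two_le_ker _)
  let ψ := DihedralGroup.lift _ _ h6 ha hconj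
  refine ⟨MonoidHom.toMulEquiv φ ψ ?_ ?_⟩
  · refine QuotientGroup.monoidHom_ext _ (PresentedGroup.ext ?_)
    rintro (i | j)
    · fin_cases i
      exacts [(mul_one (π (BnRP2.sigma 3 0)) :), hb]
    · fin_cases j
      exacts [hx, hx.trans hy.symm, hx.trans hz.symm]
  · refine DihedralGroup.hom_ext ?_ ?_
    · rw [MonoidHom.comp_apply, DihedralGroup.lift_r, map_pow, map_mul, map_mul]
      exact (by decide : (.r 3 * .sr 2 * .sr 0 : DihedralGroup 6) ^ (1 : ZMod 6).val = .r 1)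
    · rw [MonoidHom.comp_apply, DihedralGroup.lift_sr, map_mul, map_pow, map_mul, map_mul]
      exact (by decide : (.sr 0 * (.r 3 * .sr 2 * .sr 0) ^ (0 : ZMod 6).val : DihedralGroup 6) =
        .sr 0)
end

section
/- Let L be the group with presentation ⟨ w₁, w₂, w₃, w₄, t | w_i² = t³ = 1, w_iw_j = w_jw_i, tw₁t^{-1} = w₂, tw₂t^{-1} = w₁w₂, tw₃t^{-1} = w₄, tw₄t^{-1} = w₃w₄ ⟩. Then L is isomorphic to the semidirect product (ℤ/2)⁴ ⋊ ℤ/3, where the generator of ℤ/3 cyclically permutes the three nontrivial elements of the first two ℤ/2-coordinates and of the last two ℤ/2-coordinates. In particular L has order 48 and its second derived subgroup L^{(2)} is trivial. -/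
/-!
Sending `wᵢ` to the `i`-th unit vector of `(ℤ/2)⁴` and `t` to the generator of `ℤ/3` respects
the fifteen relators (a finite check), so it defines `L → (ℤ/2)⁴ ⋊ ℤ/3`. Conversely, the relations
say that `w₁, …, w₄` are pairwise commuting involutions, hence define `(ℤ/2)⁴ → L`, and that
conjugation by `t`, an element of order dividing 3, acts on them through `cyc`; by the universal
property of the semidirect product these assemble to an inverse. Hence `|L| = 16 · 3`, and
`L⁽²⁾ = 1` because the derived subgroup of a semidirect product of abelian groups lies in the
abelian normal factor.
-/

namespace Stmt16

open FreeGroup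

/-- The elementary abelian group `(ℤ/2)⁴`, coordinates `(w₁, w₂, w₃, w₄)`. -/
abbrev V : Type := ZMod 2 × ZMod 2 × ZMod 2 × ZMod 2

/-- The automorphism of `(ℤ/2)⁴` cyclically permuting the three nontrivial elements of the
first two coordinates and of the last two coordinates:
`w₁ ↦ w₂ ↦ w₁w₂ ↦ w₁` and `w₃ ↦ w₄ ↦ w₃w₄ ↦ w₃`. -/
def cyc : V ≃+ V where
  toFun p := (p.2.1, p.1 + p.2.1, p.2.2.2, p.2.2.1 + p.2.2.2)
  invFun p := (p.1 + p.2.1, p.1, p.2.2.1 + p.2.2.2, p.2.2.1)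
  left_inv := fun p => by revert p; decide
  right_inv := fun p => by revert p; decide
  map_add' := fun p q => by revert p q; decide

/-- `cyc` as a multiplicative automorphism. -/
def mulCyc : MulAut (Multiplicative V) := AddEquiv.toMultiplicative cyc

lemma mulCyc_cube : mulCyc ^ 3 = 1 :=
  MulEquiv.ext (by decide)

/-- The action of `ℤ/3` on `(ℤ/2)⁴` whose generator acts by `cyc`. -/
def actZ3 : Multiplicative (ZMod 3) →* MulAut (Multiplicative V) where
  toFun k := mulCyc ^ (Multiplicative.toAdd k).val
  map_one' := by simp
  map_mul' a b := by
    show mulCyc ^ (Multiplicative.toAdd a + Multiplicative.toAdd b).val = _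
    rw [ZMod.val_add, ← pow_eq_pow_mod _ mulCyc_cube, pow_add]

/-- Generators of `L`: 0,1,2,3 = w₁,w₂,w₃,w₄ and 4 = t. -/
abbrev w₁ : FreeGroup (Fin 5) := of 0
abbrev w₂ : FreeGroup (Fin 5) := of 1
abbrev w₃ : FreeGroup (Fin 5) := of 2
abbrev w₄ : FreeGroup (Fin 5) := of 3
abbrev t : FreeGroup (Fin 5) := of 4

/-- The defining relators of `L`. -/
def LRels : Set (FreeGroup (Fin 5)) :=
  { w₁ ^ 2, w₂ ^ 2, w₃ ^ 2, w₄ ^ 2, t ^ 3,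
    w₁ * w₂ * w₁⁻¹ * w₂⁻¹, w₁ * w₃ * w₁⁻¹ * w₃⁻¹, w₁ * w₄ * w₁⁻¹ * w₄⁻¹,
    w₂ * w₃ * w₂⁻¹ * w₃⁻¹, w₂ * w₄ * w₂⁻¹ * w₄⁻¹, w₃ * w₄ * w₃⁻¹ * w₄⁻¹,
    t * w₁ * t⁻¹ * w₂⁻¹, t * w₂ * t⁻¹ * (w₁ * w₂)⁻¹,
    t * w₃ * t⁻¹ * w₄⁻¹, t * w₄ * t⁻¹ * (w₃ * w₄)⁻¹ }

/-- The group `L = ⟨w₁,…,w₄,t | …⟩`. -/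
abbrev L : Type := PresentedGroup LRels

end Stmt16

section ZModPow

variable {G : Type*} [Group G] {n : ℕ}

def zmodPowersHom [NeZero n] (x : G) (hx : x ^ n = 1) : Multiplicative (ZMod n) →* G where
  toFun k := x ^ k.toAdd.val
  map_one' := by simp
  map_mul' a b := by
    rw [toAdd_mul, ZMod.val_add, ← pow_eq_pow_mod _ hx, pow_add]

lemma zmodPowersHom_ofAdd [NeZero n] (x : G) (hx : x ^ n = 1) (k : ZMod n) :
    zmodPowersHom x hx (.ofAdd k) = x ^ k.val :=
  rfl

@[simp]
lemma zmodPowersHom_ofAdd_one [NeZero n] (x : G) (hx : x ^ n = 1) :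
    zmodPowersHom x hx (.ofAdd 1) = x := by
  rw [zmodPowersHom_ofAdd, ZMod.val_one_eq_one_mod, ← pow_eq_pow_mod _ hx, pow_one]

lemma Commute.zmodPowersHom [NeZero n] {m : ℕ} [NeZero m] {x y : G} {hx : x ^ n = 1}
    {hy : y ^ m = 1} (h : Commute x y) (a : Multiplicative (ZMod n)) (b : Multiplicative (ZMod m)) :
    Commute (zmodPowersHom x hx a) (zmodPowersHom y hy b) :=
  h.pow_pow _ _

lemma MonoidHom.ext_zmod [NeZero n] {M : Type*} [Monoid M] {f g : Multiplicative (ZMod n) →* M}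
    (h : f (.ofAdd 1) = g (.ofAdd 1)) : f = g := by
  refine MonoidHom.ext fun k => ?_
  obtain ⟨m, rfl⟩ : ∃ m : ℕ, k = .ofAdd 1 ^ m :=
    ⟨k.toAdd.val, by rw [← ofAdd_nsmul, nsmul_one, ZMod.natCast_zmod_val]; rfl⟩
  rw [map_pow, map_pow, h]

end ZModPow

namespace PresentedGroup

variable {α : Type*} {rels : Set (FreeGroup α)} {a b c : FreeGroup α}

lemma commute_of_mem (h : a * b * a⁻¹ * b⁻¹ ∈ rels) : Commute (mk rels a) (mk rels b) := by
  have := one_of_mem h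
  rw [map_mul, map_mul, map_mul, map_inv, map_inv] at this
  exact mul_inv_eq_iff_eq_mul.mp (mul_inv_eq_one.mp this)

lemma conj_eq_of_mem (h : a * b * a⁻¹ * c⁻¹ ∈ rels) :
    mk rels a * mk rels b * (mk rels a)⁻¹ = mk rels c := by
  have := one_of_mem h
  rw [map_mul, map_mul, map_mul, map_inv, map_inv] at this
  exact mul_inv_eq_one.mp this

end PresentedGroup

lemma MonoidHom.apply_pow_eq_conj_pow {M G : Type*} [Monoid M] [Group G] {f : M →* G}
    {σ : MulAut M} {c : G} (h : ∀ v, f (σ v) = c * f v * c⁻¹) (m : ℕ) (v : M) :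
    f ((σ ^ m) v) = c ^ m * f v * (c ^ m)⁻¹ := by
  induction m with
  | zero => simp
  | succ m ih => rw [pow_succ', MulAut.mul_apply, h, ih, pow_succ']; group

lemma SemidirectProduct.derivedSeries_two_eq_bot {N G : Type*} [CommGroup N] [CommGroup G]
    (φ : G →* MulAut N) : derivedSeries (N ⋊[φ] G) 2 = ⊥ := by
  have h : derivedSeries (N ⋊[φ] G) 1 ≤ (inl : N →* N ⋊[φ] G).range := by
    rw [derivedSeries_one, range_inl_eq_ker_rightHom]
    exact Abelianization.commutator_subset_ker _
  rw [derivedSeries_succ, eq_bot_iff]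
  exact (Subgroup.commutator_mono h h).trans
    (Subgroup.commutator_self_eq_bot_iff.mpr inferInstance).le

lemma derivedSeries_eq_bot_of_injective {G H : Type*} [Group G] [Group H] {f : G →* H}
    (hf : Function.Injective f) {n : ℕ} (h : derivedSeries H n = ⊥) : derivedSeries G n = ⊥ :=
  (Subgroup.map_eq_bot_iff_of_injective _ hf).mp
    (eq_bot_iff.mpr ((map_derivedSeries_le_derivedSeries f n).trans h.le))

namespace Stmt16

def toPi : Multiplicative V ≃* (Fin 4 → Multiplicative (ZMod 2)) where
  toFun v := ![.ofAdd v.toAdd.1, .ofAdd v.toAdd.2.1, .ofAdd v.toAdd.2.2.1, .ofAdd v.toAdd.2.2.2]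
  invFun f := .ofAdd ((f 0).toAdd, (f 1).toAdd, (f 2).toAdd, (f 3).toAdd)
  left_inv _ := rfl
  right_inv f := by ext i; fin_cases i <;> rfl
  map_mul' _ _ := by ext i; fin_cases i <;> rfl

def unitVec (i : Fin 4) : Multiplicative V := toPi.symm (MonoidHom.mulSingle _ i (.ofAdd 1))

lemma monoidHom_ext_V {M : Type*} [Monoid M] {f g : Multiplicative V →* M}
    (h : ∀ i, f (unitVec i) = g (unitVec i)) : f = g := by
  set e := toPi.symm.toMonoidHom
  have key : f.comp e = g.comp e :=
    MonoidHom.pi_ext fun i => DFunLike.congr_fun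
      (MonoidHom.ext_zmod (f := (f.comp e).comp (MonoidHom.mulSingle (fun _ => _) i))
        (g := (g.comp e).comp (MonoidHom.mulSingle (fun _ => _) i)) (h i))
  exact (MonoidHom.cancel_right toPi.symm.surjective).mp key

def ofW (i : Fin 4) : L := PresentedGroup.of i.castSucc

def ofT : L := PresentedGroup.of (Fin.last 4)

lemma ofW_sq (i : Fin 4) : ofW i ^ 2 = 1 := by
  fin_cases i <;> exact PresentedGroup.one_of_mem (by simp [LRels])

lemma ofT_cube : ofT ^ 3 = 1 :=
  PresentedGroup.one_of_mem (by simp [LRels])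

lemma commute_ofW_of_lt {i j : Fin 4} (hij : i < j) : Commute (ofW i) (ofW j) := by
  fin_cases i <;> fin_cases j <;> simp at hij <;>
    exact PresentedGroup.commute_of_mem (by simp [LRels])

lemma commute_zmodPowersHom_ofW : Pairwise fun i j => ∀ x y,
    Commute (zmodPowersHom (ofW i) (ofW_sq i) x) (zmodPowersHom (ofW j) (ofW_sq j) y) := by
  intro i j hij
  rcases hij.lt_or_gt with h | h
  exacts [(commute_ofW_of_lt h).zmodPowersHom, (commute_ofW_of_lt h).symm.zmodPowersHom]

def wHom : Multiplicative V →* L :=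
  (MonoidHom.noncommPiCoprod (fun i => zmodPowersHom (ofW i) (ofW_sq i))
    commute_zmodPowersHom_ofW).comp toPi.toMonoidHom

lemma wHom_unitVec (i : Fin 4) : wHom (unitVec i) = ofW i := by
  simp [wHom, unitVec]

lemma wHom_mulCyc (v : Multiplicative V) : wHom (mulCyc v) = ofT * wHom v * ofT⁻¹ := by
  suffices wHom.comp mulCyc.toMonoidHom = (MulAut.conj ofT).toMonoidHom.comp wHom from
    DFunLike.congr_fun this v
  refine monoidHom_ext_V fun i => ?_
  simp only [MonoidHom.comp_apply, MulEquiv.coe_toMonoidHom, MulAut.conj_apply, wHom_unitVec]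
  obtain rfl | rfl | rfl | rfl : i = 0 ∨ i = 1 ∨ i = 2 ∨ i = 3 := by omega
  · rw [show mulCyc (unitVec 0) = unitVec 1 by decide, wHom_unitVec]
    exact (PresentedGroup.conj_eq_of_mem (by simp [LRels])).symm
  · rw [show mulCyc (unitVec 1) = unitVec 0 * unitVec 1 by decide, map_mul, wHom_unitVec,
      wHom_unitVec]
    exact (PresentedGroup.conj_eq_of_mem (by simp [LRels])).symm
  · rw [show mulCyc (unitVec 2) = unitVec 3 by decide, wHom_unitVec]
    exact (PresentedGroup.conj_eq_of_mem (by simp [LRels])).symm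
  · rw [show mulCyc (unitVec 3) = unitVec 2 * unitVec 3 by decide, map_mul, wHom_unitVec,
      wHom_unitVec]
    exact (PresentedGroup.conj_eq_of_mem (by simp [LRels])).symm

def tHom : Multiplicative (ZMod 3) →* L := zmodPowersHom ofT ofT_cube

-- `actZ3 g` and `tHom g` are by definition the `g.toAdd.val`-th powers of `mulCyc` and `ofT`.
lemma wHom_comp_actZ3 (g : Multiplicative (ZMod 3)) :
    wHom.comp (actZ3 g).toMonoidHom = (MulAut.conj (tHom g)).toMonoidHom.comp wHom :=
  MonoidHom.ext (MonoidHom.apply_pow_eq_conj_pow wHom_mulCyc g.toAdd.val)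

def ofSemidirect : Multiplicative V ⋊[actZ3] Multiplicative (ZMod 3) →* L :=
  SemidirectProduct.lift wHom tHom wHom_comp_actZ3

def semidirectGen : Fin 5 → Multiplicative V ⋊[actZ3] Multiplicative (ZMod 3) :=
  Fin.lastCases (.inr (.ofAdd 1)) fun i => .inl (unitVec i)

lemma semidirectGen_rels : ∀ r ∈ LRels, FreeGroup.lift semidirectGen r = 1 := by
  simp only [LRels, Set.mem_insert_iff, Set.mem_singleton_iff, forall_eq_or_imp, forall_eq,
    map_mul, map_inv, map_pow, FreeGroup.lift_apply_of]
  and_intros <;> decide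

def toSemidirect : L →* Multiplicative V ⋊[actZ3] Multiplicative (ZMod 3) :=
  PresentedGroup.toGroup semidirectGen_rels

lemma toSemidirect_ofW (i : Fin 4) : toSemidirect (ofW i) = .inl (unitVec i) := by
  simp [toSemidirect, ofW, semidirectGen]

lemma toSemidirect_ofT : toSemidirect ofT = .inr (.ofAdd 1) :=
  (PresentedGroup.toGroup.of semidirectGen_rels).trans Fin.lastCases_last

lemma ofSemidirect_comp_toSemidirect : ofSemidirect.comp toSemidirect = MonoidHom.id L := by
  refine PresentedGroup.ext fun i => ?_
  induction i using Fin.lastCases with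
  | last =>
    change ofSemidirect (toSemidirect ofT) = ofT
    simp [toSemidirect_ofT, ofSemidirect, tHom]
  | cast i =>
    change ofSemidirect (toSemidirect (ofW i)) = ofW i
    simp [toSemidirect_ofW, ofSemidirect, wHom_unitVec]

lemma toSemidirect_comp_ofSemidirect : toSemidirect.comp ofSemidirect = MonoidHom.id _ := by
  refine SemidirectProduct.hom_ext (monoidHom_ext_V fun i => ?_) (MonoidHom.ext_zmod ?_)
  · simp [ofSemidirect, wHom_unitVec, toSemidirect_ofW]
  · simp [ofSemidirect, tHom, toSemidirect_ofT]

def mulEquivSemidirect : L ≃* Multiplicative V ⋊[actZ3] Multiplicative (ZMod 3) :=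
  MonoidHom.toMulEquiv toSemidirect ofSemidirect ofSemidirect_comp_toSemidirect
    toSemidirect_comp_ofSemidirect

/-- `L ≅ (ℤ/2)⁴ ⋊ ℤ/3`, where the generator of `ℤ/3` cyclically permutes the three
nontrivial elements of the first two and of the last two `ℤ/2`-coordinates; in particular
`L` has order 48 and its second derived subgroup is trivial. -/
theorem L_iso_semidirect :
    Nonempty (L ≃* (Multiplicative V ⋊[actZ3] Multiplicative (ZMod 3))) ∧
    Nat.card L = 48 ∧ derivedSeries L 2 = ⊥ := by
  refine ⟨⟨mulEquivSemidirect⟩, ?_, ?_⟩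
  · rw [Nat.card_congr mulEquivSemidirect.toEquiv, SemidirectProduct.card]
    simp
  · exact derivedSeries_eq_bot_of_injective mulEquivSemidirect.injective
      (SemidirectProduct.derivedSeries_two_eq_bot actZ3)

end Stmt16
end
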